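/- arXiv:1004.2371 — 7 statements merged into one kernel-verified Lean document; each statement's English description precedes it below -/
import Mathlib

section
/- Let n ≥ 1 and let V: ℝⁿ → ℝ be continuously differentiable with lim_{|x|→∞} ⟨∇V(x), x⟩/|x| = +∞. Then lim_{|x|→∞} V(x)/|x| = +∞. -/
open MeasureTheory Filter Real Set
open scoped InnerProductSpace

noncomputable section

/-- Euclidean space ℝⁿ. -/
abbrev Euc (n : ℕ) := EuclideanSpace ℝ (Fin n)

/-- `InHT n T x φ φ'` : `φ : [0,T] → ℝⁿ` is an absolutely continuous path starting at `x`,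
with (a.e.) derivative `φ'` which is square integrable on `[0,T]`. -/
def InHT (n : ℕ) (T : ℝ) (x : Euc n) (φ φ' : ℝ → Euc n) : Prop :=
  φ 0 = x ∧
  IntervalIntegrable φ' volume 0 T ∧
  IntervalIntegrable (fun t => ‖φ' t‖ ^ 2) volume 0 T ∧
  ∀ t ∈ Set.Icc (0 : ℝ) T, φ t = x + ∫ s in (0 : ℝ)..t, φ' s

/-- Freidlin–Wentzell action functional `I^x_T`. -/
def FW (n : ℕ) (c : Euc n → Euc n) (T : ℝ) (φ φ' : ℝ → Euc n) : ℝ :=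
  (1 / 2) * ∫ t in (0 : ℝ)..T, ‖φ' t - c (φ t)‖ ^ 2

/-- Power dissipated by the vector field `b` along the path, `L_T`. -/
def Diss (n : ℕ) (b : Euc n → Euc n) (T : ℝ) (φ φ' : ℝ → Euc n) : ℝ :=
  (2 / T) * ∫ t in (0 : ℝ)..T, ⟪b (φ t), φ' t⟫_ℝ

/-- `S^{xy}_T(q)`, infimum of the action over paths from `x` to `y` dissipating power `q`. -/
def Sxy (n : ℕ) (b c : Euc n → Euc n) (T : ℝ) (x y : Euc n) (q : ℝ) : ℝ :=
  sInf { r : ℝ | ∃ φ φ' : ℝ → Euc n,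
    InHT n T x φ φ' ∧ φ T = y ∧ Diss n b T φ φ' = q ∧ FW n c T φ φ' = r }

/-- `S^{x}_T(q)`, infimum of the action over paths from `x` with free endpoint. -/
def Sx (n : ℕ) (b c : Euc n → Euc n) (T : ℝ) (x : Euc n) (q : ℝ) : ℝ :=
  sInf { r : ℝ | ∃ φ φ' : ℝ → Euc n,
    InHT n T x φ φ' ∧ Diss n b T φ φ' = q ∧ FW n c T φ φ' = r }

/-- `s^x(q) = inf_{T>0} S^{xx}_T(q)/T`. -/
def sfun (n : ℕ) (b c : Euc n → Euc n) (x : Euc n) (q : ℝ) : ℝ :=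
  sInf { r : ℝ | ∃ T : ℝ, 0 < T ∧ r = Sxy n b c T x x q / T }

/-- Assumption (A). -/
def AssumptionA (n : ℕ) (V : Euc n → ℝ) : Prop :=
  ContDiff ℝ 2 V ∧
  Tendsto (fun x : Euc n => ⟪gradient V x, x⟫_ℝ / ‖x‖) (cocompact (Euc n)) atTop

/-- Assumption (B): `b` is `C¹`, bounded with bounded derivative and not conservative. -/
def AssumptionB (n : ℕ) (b : Euc n → Euc n) : Prop :=
  ContDiff ℝ 1 b ∧
  (∃ M : ℝ, ∀ x, ‖b x‖ ≤ M) ∧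
  (∃ M : ℝ, ∀ x, ‖fderiv ℝ b x‖ ≤ M) ∧
  ¬ ∃ F : Euc n → ℝ, Differentiable ℝ F ∧ ∀ x, gradient F x = b x

/-!
Fix `M` and choose `R` with `⟪∇V y, y⟫ / ‖y‖ ≥ M` for `‖y‖ ≥ R`. For `‖u‖ = 1` the derivative of
`t ↦ V (t • u)` is `⟪∇V (t • u), t • u⟫ / t ≥ M` for `t > R`, so the mean value inequality gives
`V x ≥ M ‖x‖ + C` for `‖x‖ ≥ R`, with `C` coming from the minimum of `V` on the compact ball of
radius `R`. Dividing by `‖x‖` and letting `M → ∞` gives the claim.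
-/

theorem Filter.Tendsto.div_atTop_of_forall_exists_mul_add_le {α : Type*} {l : Filter α}
    {f g : α → ℝ} (hg : Tendsto g l atTop) (hf : ∀ M, ∃ C, ∀ᶠ x in l, M * g x + C ≤ f x) :
    Tendsto (fun x => f x / g x) l atTop := by
  refine tendsto_atTop.2 fun b => ?_
  obtain ⟨C, hC⟩ := hf (b + 1)
  filter_upwards [hC, hg.eventually_ge_atTop (max |C| 1)] with x hfx hgx
  have hg0 : 0 < g x := one_pos.trans_le ((le_max_right _ _).trans hgx)
  rw [le_div_iff₀ hg0]
  linarith [neg_abs_le C, le_max_left |C| 1]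

section RadialGrowth

variable {E : Type*} [NormedAddCommGroup E] [InnerProductSpace ℝ E] [CompleteSpace E]
  {V : E → ℝ}

theorem hasDerivAt_comp_smul_const (hV : Differentiable ℝ V) (u : E) (t : ℝ) :
    HasDerivAt (fun s : ℝ => V (s • u)) ⟪gradient V (t • u), u⟫_ℝ t := by
  rw [inner_gradient_left]
  exact (hV (t • u)).hasFDerivAt.comp_hasDerivAt t (by simpa using (hasDerivAt_id t).smul_const u)

theorem mul_sub_le_sub_along_ray (hV : Differentiable ℝ V) {M R t : ℝ} (hR : 0 ≤ R)
    (hRt : R ≤ t) (hgrowth : ∀ y : E, R ≤ ‖y‖ → M ≤ ⟪gradient V y, y⟫_ℝ / ‖y‖) {u : E}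
    (hu : ‖u‖ = 1) : M * (t - R) ≤ V (t • u) - V (R • u) := by
  have hderiv := hasDerivAt_comp_smul_const hV u
  refine (convex_Ici R).mul_sub_le_image_sub_of_le_deriv
    (fun r _ => (hderiv r).continuousAt.continuousWithinAt)
    (fun r _ => (hderiv r).differentiableAt.differentiableWithinAt) ?_ R self_mem_Ici t hRt hRt
  intro r hr
  rw [interior_Ici, mem_Ioi] at hr
  have hr0 : 0 < r := hR.trans_lt hr
  have hnorm : ‖r • u‖ = r := by rw [norm_smul, hu, mul_one, norm_of_nonneg hr0.le]
  have hM := hgrowth (r • u) (hnorm.symm ▸ hr.le)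
  rwa [hnorm, real_inner_smul_right, mul_div_cancel_left₀ _ hr0.ne', ← (hderiv r).deriv] at hM

theorem exists_mul_norm_add_le_of_tendsto_inner_gradient [ProperSpace E]
    (hV : Differentiable ℝ V)
    (hA : Tendsto (fun x => ⟪gradient V x, x⟫_ℝ / ‖x‖) (Bornology.cobounded E) atTop) (M : ℝ) :
    ∃ C, ∀ᶠ x in Bornology.cobounded E, M * ‖x‖ + C ≤ V x := by
  obtain ⟨R, -, hR⟩ := hasBasis_cobounded_norm.eventually_iff.1 (hA.eventually_ge_atTop M)
  set ρ := max R 1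
  have hρ : 0 < ρ := one_pos.trans_le (le_max_right _ _)
  obtain ⟨C, hC⟩ := (isCompact_closedBall (0 : E) ρ).bddBelow_image hV.continuous.continuousOn
  refine ⟨C - M * ρ, (eventually_cobounded_le_norm ρ).mono fun x hx => ?_⟩
  have hx0 : ‖x‖ ≠ 0 := (hρ.trans_le hx).ne'
  set u := ‖x‖⁻¹ • x
  have hu : ‖u‖ = 1 := by rw [norm_smul, norm_inv, norm_norm, inv_mul_cancel₀ hx0]
  have hxu : ‖x‖ • u = x := smul_inv_smul₀ hx0 x
  have hρu : ρ • u ∈ Metric.closedBall (0 : E) ρ := by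
    simp [norm_smul, hu, abs_of_pos hρ]
  have hray := mul_sub_le_sub_along_ray hV hρ.le hx
    (fun y hy => hR ((le_max_left R 1).trans hy)) hu
  rw [hxu] at hray
  linarith [hC (mem_image_of_mem V hρu)]

theorem tendsto_div_norm_atTop_of_tendsto_inner_gradient [ProperSpace E]
    (hV : Differentiable ℝ V)
    (hA : Tendsto (fun x => ⟪gradient V x, x⟫_ℝ / ‖x‖) (Bornology.cobounded E) atTop) :
    Tendsto (fun x => V x / ‖x‖) (Bornology.cobounded E) atTop :=
  tendsto_norm_cobounded_atTop.div_atTop_of_forall_exists_mul_add_le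
    (exists_mul_norm_add_le_of_tendsto_inner_gradient hV hA)

end RadialGrowth

theorem statement0_general (n : ℕ) (V : Euc n → ℝ) (hV : ContDiff ℝ 1 V)
    (hA : Tendsto (fun x : Euc n => ⟪gradient V x, x⟫_ℝ / ‖x‖) (cocompact (Euc n)) atTop) :
    Tendsto (fun x : Euc n => V x / ‖x‖) (cocompact (Euc n)) atTop := by
  rw [← Metric.cobounded_eq_cocompact] at hA ⊢
  exact tendsto_div_norm_atTop_of_tendsto_inner_gradient (hV.differentiable one_ne_zero) hA

/-- if `V` is `C¹` and `⟨∇V(x), x⟩/|x| → +∞` as `|x| → ∞`,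
then `V(x)/|x| → +∞` as `|x| → ∞`. -/
theorem statement0 (n : ℕ) (hn : 1 ≤ n) (V : Euc n → ℝ) (hV : ContDiff ℝ 1 V)
    (hA : Tendsto (fun x : Euc n => ⟪gradient V x, x⟫_ℝ / ‖x‖) (cocompact (Euc n)) atTop) :
    Tendsto (fun x : Euc n => V x / ‖x‖) (cocompact (Euc n)) atTop :=
  statement0_general n V hV hA
end
end

section
/- Let V: ℝⁿ → ℝ be C² and satisfy lim_{|x|→∞} ⟨∇V(x), x⟩/|x| = +∞ (assumption (A)). Then for every ε > 0 the integral ∫_{ℝⁿ} exp(−V(x)/ε) dx is finite. -/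
/-!
Far from the origin, assumption (A) gives `‖y‖ ≤ ⟪∇V y, y⟫`, so along every ray `V` eventually
grows with slope at least one; with a minimum of `V` on a large ball this yields `V x ≥ ‖x‖ - C`.
Hence `exp (-V x / ε) ≤ exp (C / ε) * exp (-‖x‖ / ε)`, and `exp (-‖x‖ / ε)` is integrable because it
is dominated by `(1 + ‖x‖) ^ (-(n + 1))`.
-/

open MeasureTheory Filter Real Set
open scoped InnerProductSpace

noncomputable section

lemma exp_neg_mul_le_mul_one_add_rpow_neg {b t : ℝ} (hb : 0 < b) (ht : 0 ≤ t) (k : ℕ) :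
    exp (-(b * t)) ≤ exp b * k.factorial / b ^ k * (1 + t) ^ (-(k : ℝ)) := by
  have hpos : 0 < b * (1 + t) := by positivity
  have hexp := pow_div_factorial_le_exp _ hpos.le k
  rw [rpow_neg (by positivity), rpow_natCast]
  calc exp (-(b * t)) = exp b / exp (b * (1 + t)) := by
        rw [← exp_sub]; ring_nf
    _ ≤ exp b / ((b * (1 + t)) ^ k / k.factorial) := by gcongr
    _ = _ := by rw [mul_pow]; field_simp

lemma integrable_exp_neg_mul_norm {E : Type*} [NormedAddCommGroup E] [NormedSpace ℝ E]
    [FiniteDimensional ℝ E] [MeasurableSpace E] [BorelSpace E] (μ : Measure E)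
    [μ.IsAddHaarMeasure] {b : ℝ} (hb : 0 < b) :
    Integrable (fun x : E ↦ exp (-(b * ‖x‖))) μ := by
  set k := Module.finrank ℝ E + 1
  refine ((integrable_one_add_norm (μ := μ) (r := k) (by simp [k])).const_mul
    (exp b * k.factorial / b ^ k)).mono' (by fun_prop) (.of_forall fun x ↦ ?_)
  rw [norm_of_nonneg (exp_pos _).le]
  exact exp_neg_mul_le_mul_one_add_rpow_neg hb (norm_nonneg x) k

section Gradient
variable {E : Type*} [NormedAddCommGroup E] [InnerProductSpace ℝ E] [CompleteSpace E]
  {V : E → ℝ}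

lemma eventually_norm_le_inner_gradient
    (hV : Tendsto (fun x ↦ ⟪gradient V x, x⟫_ℝ / ‖x‖) (cocompact E) atTop) :
    ∀ᶠ y in cocompact E, ‖y‖ ≤ ⟪gradient V y, y⟫_ℝ := by
  filter_upwards [hV.eventually_ge_atTop 1,
    (isCompact_singleton (x := (0 : E))).compl_mem_cocompact] with y hy hy0
  rwa [le_div_iff₀ (norm_pos_iff.2 hy0), one_mul] at hy

lemma hasDerivAt_comp_smul_right (hV : Differentiable ℝ V) (u : E) (s : ℝ) :
    HasDerivAt (fun t : ℝ ↦ V (t • u)) ⟪gradient V (s • u), u⟫_ℝ s := by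
  have hline : HasDerivAt (fun t : ℝ ↦ t • u) u s := by
    simpa using (hasDerivAt_id s).smul_const u
  exact (hV _).hasGradientAt.hasFDerivAt.comp_hasDerivAt s hline

lemma monotoneOn_comp_smul_sub (hV : Differentiable ℝ V) {R : ℝ} (hR : 0 < R)
    (hgrad : ∀ y, R ≤ ‖y‖ → ‖y‖ ≤ ⟪gradient V y, y⟫_ℝ) {u : E} (hu : ‖u‖ = 1) :
    MonotoneOn (fun s : ℝ ↦ V (s • u) - s) (Ici R) := by
  have hderiv (s : ℝ) := (hasDerivAt_comp_smul_right hV u s).sub (hasDerivAt_id s)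
  refine monotoneOn_of_hasDerivWithinAt_nonneg (convex_Ici R)
    (fun s _ ↦ (hderiv s).continuousAt.continuousWithinAt)
    (fun s _ ↦ (hderiv s).hasDerivWithinAt) fun s hs ↦ ?_
  rw [interior_Ici, mem_Ioi] at hs
  have hs0 : 0 < s := hR.trans hs
  have hnorm : ‖s • u‖ = s := by rw [norm_smul, hu, mul_one, norm_of_nonneg hs0.le]
  have h := hgrad (s • u) (by rw [hnorm]; exact hs.le)
  rw [hnorm, real_inner_smul_right] at h
  have : 1 ≤ ⟪gradient V (s • u), u⟫_ℝ := le_of_mul_le_mul_left (by simpa using h) hs0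
  simpa using this

lemma exists_norm_sub_le_of_norm_le_inner_gradient [FiniteDimensional ℝ E]
    (hV : Differentiable ℝ V) (hgrad : ∀ᶠ y in cocompact E, ‖y‖ ≤ ⟪gradient V y, y⟫_ℝ) :
    ∃ C, ∀ x, ‖x‖ - C ≤ V x := by
  rw [← Metric.cobounded_eq_cocompact, ← comap_norm_atTop, eventually_comap,
    eventually_atTop] at hgrad
  obtain ⟨R₀, hR₀⟩ := hgrad
  set R := max R₀ 1
  have hR : 0 < R := lt_max_of_lt_right one_pos
  have hgradR : ∀ y, R ≤ ‖y‖ → ‖y‖ ≤ ⟪gradient V y, y⟫_ℝ :=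
    fun y hy ↦ hR₀ _ ((le_max_left _ _).trans hy) y rfl
  obtain ⟨x₀, -, hx₀⟩ := (isCompact_closedBall (0 : E) R).exists_isMinOn
    (Metric.nonempty_closedBall.2 hR.le) hV.continuous.continuousOn
  refine ⟨R - V x₀, fun x ↦ ?_⟩
  rcases le_or_gt ‖x‖ R with hx | hx
  · have : V x₀ ≤ V x := hx₀ (mem_closedBall_zero_iff.2 hx)
    linarith
  · have hx0 : 0 < ‖x‖ := hR.trans hx
    set u := ‖x‖⁻¹ • x
    have hu : ‖u‖ = 1 := by rw [norm_smul, norm_inv, norm_norm, inv_mul_cancel₀ hx0.ne']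
    have hmono : V (R • u) - R ≤ V (‖x‖ • u) - ‖x‖ :=
      monotoneOn_comp_smul_sub hV hR hgradR hu (mem_Ici.2 le_rfl) hx.le.ge hx.le
    have hball : V x₀ ≤ V (R • u) := hx₀ (by
      rw [mem_closedBall_zero_iff, norm_smul, hu, mul_one, norm_of_nonneg hR.le])
    have hxu : ‖x‖ • u = x := by rw [smul_smul, mul_inv_cancel₀ hx0.ne', one_smul]
    rw [hxu] at hmono
    linarith
end Gradient

/-- under assumption (A), `∫ exp(-V(x)/ε) dx < ∞` for every `ε > 0`. -/
theorem statement1 (n : ℕ) (V : Euc n → ℝ) (hA : AssumptionA n V)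
    (ε : ℝ) (hε : 0 < ε) :
    Integrable (fun x : Euc n => Real.exp (-V x / ε)) volume := by
  obtain ⟨hV, hlim⟩ := hA
  obtain ⟨C, hC⟩ := exists_norm_sub_le_of_norm_le_inner_gradient
    (hV.differentiable two_ne_zero) (eventually_norm_le_inner_gradient hlim)
  refine ((integrable_exp_neg_mul_norm volume (inv_pos.2 hε)).const_mul (exp (C / ε))).mono'
    (hV.continuous.neg.div_const ε).rexp.aestronglyMeasurable (.of_forall fun x ↦ ?_)
  rw [norm_of_nonneg (exp_pos _).le, ← exp_add, exp_le_exp, div_eq_mul_inv, div_eq_mul_inv]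
  have := mul_le_mul_of_nonneg_right (hC x) (inv_pos.2 hε).le
  linarith
end
end

section
/- Suppose b: ℝⁿ → ℝⁿ is C¹ and bounded with bounded derivatives, and b is not conservative, i.e. b is not the gradient of any differentiable function on ℝⁿ. Then there exist a point z ∈ ℝⁿ and a real number q̄ ≠ 0 such that for every p ∈ ℝ with |p| ≤ |q̄| there exists an absolutely continuous path ξ: [0,1] → ℝⁿ with ∫₀¹ |ξ̇_t|² dt < ∞, ξ(0) = ξ(1) = z, and ∫₀¹ ⟨b(ξ_t), ξ̇_t⟩ dt = p. -/
open MeasureTheory Filter Real Set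
open scoped InnerProductSpace

noncomputable section

/-!
If every triangle had zero circulation for the 1-form `⟪b ·, ·⟫`, then its curve integral along
the segment `[0, y]`, as a function of `y`, would be a potential for `b`. Hence some triangle `z a c` has circulation
`q̄ ≠ 0`. Shrinking it homothetically towards `z` moves the circulation continuously from `q̄`
to `0`, and reversing the orientation changes its sign, so by the intermediate value theorem
every `p` with `|p| ≤ |q̄|` is the circulation of a triangle with vertex `z`. Run through as
a polygonal loop at `z`, such a triangle is an `H¹` path whose work is that circulation.
-/

open scoped unitInterval Topology

theorem differentiableAt_and_norm_deriv_le_of_eventuallyEq_comp_two_mul_sub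
    {E : Type*} [NormedAddCommGroup E] [NormedSpace ℝ E] {f g : ℝ → E} {t k C : ℝ}
    (hfg : g =ᶠ[𝓝 t] fun s => f (2 * s - k))
    (hf : DifferentiableAt ℝ f (2 * t - k)) (hC : ‖deriv f (2 * t - k)‖ ≤ C) :
    DifferentiableAt ℝ g t ∧ ‖deriv g t‖ ≤ 2 * C := by
  have hd : HasDerivAt g ((2 : ℝ) • deriv f (2 * t - k)) t := by
    have := hf.hasDerivAt.scomp t (((hasDerivAt_id' t).const_mul 2).sub_const k)
    rw [mul_one] at this
    exact this.congr_of_eventuallyEq hfg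
  refine ⟨hd.differentiableAt, ?_⟩
  rw [hd.deriv, norm_smul, Real.norm_two]
  gcongr

namespace Path

variable {E : Type*} [NormedAddCommGroup E] [NormedSpace ℝ E] {a b c : E}

def HasBoundedVelocity (γ : Path a b) : Prop :=
  ∃ C : ℝ, ∃ s : Set ℝ, s.Countable ∧
    ∀ t ∈ Ioo (0 : ℝ) 1 \ s, DifferentiableAt ℝ γ.extend t ∧ ‖deriv γ.extend t‖ ≤ C

theorem hasBoundedVelocity_segment (a b : E) : (Path.segment a b).HasBoundedVelocity := by
  refine ⟨‖b - a‖, ∅, countable_empty, fun t ht => ?_⟩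
  have hd : HasDerivAt (Path.segment a b).extend (b - a) t :=
    (AffineMap.hasDerivAt_lineMap (a := a) (b := b) (x := t)).congr_of_eventuallyEq <|
      (eqOn_extend_segment a b).eventuallyEq_of_mem (Icc_mem_nhds ht.1.1 ht.1.2)
  exact ⟨hd.differentiableAt, hd.deriv ▸ le_rfl⟩

theorem HasBoundedVelocity.trans {γ₁ : Path a b} {γ₂ : Path b c}
    (h₁ : γ₁.HasBoundedVelocity) (h₂ : γ₂.HasBoundedVelocity) :
    (γ₁.trans γ₂).HasBoundedVelocity := by
  obtain ⟨C₁, s₁, hs₁, hγ₁⟩ := h₁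
  obtain ⟨C₂, s₂, hs₂, hγ₂⟩ := h₂
  refine ⟨2 * max C₁ C₂, {1 / 2} ∪ (· / 2) '' s₁ ∪ (fun t => (t + 1) / 2) '' s₂,
    ((countable_singleton _).union (hs₁.image _)).union (hs₂.image _), ?_⟩
  rintro t ⟨⟨ht₀, ht₁⟩, hts⟩
  simp only [mem_union, mem_singleton_iff, mem_image, not_or] at hts
  obtain ⟨⟨hhalf, hts₁⟩, hts₂⟩ := hts
  rcases lt_or_gt_of_ne hhalf with ht | ht
  · have hmem : 2 * t - 0 ∈ Ioo (0 : ℝ) 1 \ s₁ :=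
      ⟨⟨by linarith, by linarith⟩, fun h => hts₁ ⟨_, h, by ring⟩⟩
    refine differentiableAt_and_norm_deriv_le_of_eventuallyEq_comp_two_mul_sub ?_
      (hγ₁ _ hmem).1 ((hγ₁ _ hmem).2.trans (le_max_left _ _))
    filter_upwards [eventually_le_nhds ht] with s hs
    rw [extend_trans_of_le_half _ _ hs, sub_zero]
  · have hmem : 2 * t - 1 ∈ Ioo (0 : ℝ) 1 \ s₂ :=
      ⟨⟨by linarith, by linarith⟩, fun h => hts₂ ⟨_, h, by ring⟩⟩
    refine differentiableAt_and_norm_deriv_le_of_eventuallyEq_comp_two_mul_sub ?_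
      (hγ₂ _ hmem).1 ((hγ₂ _ hmem).2.trans (le_max_right _ _))
    filter_upwards [eventually_ge_nhds ht] with s hs
    rw [extend_trans_of_half_le _ _ hs]

theorem HasBoundedVelocity.ae_norm_deriv_le {γ : Path a b} (hγ : γ.HasBoundedVelocity) :
    ∃ C, ∀ᵐ t ∂volume.restrict (Ioc (0 : ℝ) 1), ‖deriv γ.extend t‖ ≤ C := by
  obtain ⟨C, s, hs, hγ⟩ := hγ
  refine ⟨C, ?_⟩
  rw [← restrict_Ioo_eq_restrict_Ioc]
  filter_upwards [ae_restrict_mem measurableSet_Ioo, ae_restrict_of_ae (hs.ae_notMem volume)]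
    with t ht hts
  exact (hγ t ⟨ht, hts⟩).2

variable [CompleteSpace E]

theorem HasBoundedVelocity.intervalIntegrable_deriv {γ : Path a b}
    (hγ : γ.HasBoundedVelocity) : IntervalIntegrable (deriv γ.extend) volume 0 1 := by
  obtain ⟨C, hC⟩ := hγ.ae_norm_deriv_le
  rw [intervalIntegrable_iff_integrableOn_Ioc_of_le zero_le_one]
  exact .of_bound measure_Ioc_lt_top (aestronglyMeasurable_deriv _ _) C hC

theorem HasBoundedVelocity.intervalIntegrable_norm_deriv_sq {γ : Path a b}
    (hγ : γ.HasBoundedVelocity) :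
    IntervalIntegrable (fun t => ‖deriv γ.extend t‖ ^ 2) volume 0 1 := by
  obtain ⟨C, hC⟩ := hγ.ae_norm_deriv_le
  rw [intervalIntegrable_iff_integrableOn_Ioc_of_le zero_le_one]
  refine .of_bound measure_Ioc_lt_top
    ((aestronglyMeasurable_deriv _ _).norm.pow 2) (C ^ 2) ?_
  filter_upwards [hC] with t ht
  rw [Real.norm_eq_abs, abs_pow, abs_norm]
  exact pow_le_pow_left₀ (norm_nonneg _) ht 2

theorem HasBoundedVelocity.extend_eq_add_integral_deriv {γ : Path a b}
    (hγ : γ.HasBoundedVelocity) {t : ℝ} (ht : t ∈ I) :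
    γ.extend t = a + ∫ s in (0 : ℝ)..t, deriv γ.extend s := by
  obtain ⟨C, s, hs, hγ'⟩ := id hγ
  rw [integral_eq_of_hasDerivAt_off_countable_of_le _ _ ht.1 hs γ.continuous_extend.continuousOn
    (fun u hu => (hγ' u ⟨⟨hu.1.1, hu.1.2.trans_le ht.2⟩, hu.2⟩).1.hasDerivAt)
    (hγ.intervalIntegrable_deriv.mono_set (uIcc_subset_uIcc_left (by simp [ht.1, ht.2]))),
    extend_zero]
  abel

end Path

theorem Path.HasBoundedVelocity.inHT {n : ℕ} {a b : Euc n} {γ : Path a b}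
    (hγ : γ.HasBoundedVelocity) : InHT n 1 a γ.extend (deriv γ.extend) :=
  ⟨γ.extend_zero, hγ.intervalIntegrable_deriv, hγ.intervalIntegrable_norm_deriv_sq,
    fun _ ht => hγ.extend_eq_add_integral_deriv ht⟩

section CurveIntegral

open AffineMap

variable {E F : Type*} [NormedAddCommGroup E] [NormedSpace ℝ E]
  [NormedAddCommGroup F] [NormedSpace ℝ F] {ω : E → E →L[ℝ] F}

def Path.triangle (x y z : E) : Path x x :=
  (Path.segment x y).trans ((Path.segment y z).trans (Path.segment z x))

theorem Path.hasBoundedVelocity_triangle (x y z : E) :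
    (Path.triangle x y z).HasBoundedVelocity :=
  (hasBoundedVelocity_segment x y).trans
    ((hasBoundedVelocity_segment y z).trans (hasBoundedVelocity_segment z x))

theorem curveIntegral_segment_swap (ω : E → E →L[ℝ] F) (x y : E) :
    ∫ᶜ u in .segment y x, ω u = -∫ᶜ u in .segment x y, ω u := by
  rw [← Path.segment_symm, curveIntegral_symm]

theorem Continuous.curveIntegrable_segment (hω : Continuous ω) (x y : E) :
    CurveIntegrable ω (.segment x y) :=
  _root_.curveIntegrable_segment.2 <|
    ((hω.comp lineMap_continuous).clm_apply continuous_const).intervalIntegrable _ _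

theorem Continuous.continuous_curveIntegral_segment (hω : Continuous ω) :
    Continuous fun p : E × E => ∫ᶜ u in .segment p.1 p.2, ω u := by
  simp only [curveIntegral_segment, lineMap_apply_module]
  exact intervalIntegral.continuous_parametric_intervalIntegral_of_continuous'
    ((hω.comp (by fun_prop)).clm_apply (by fun_prop)) 0 1

theorem curveIntegral_triangle (hω : Continuous ω) (x y z : E) :
    ∫ᶜ u in .triangle x y z, ω u =
      (∫ᶜ u in .segment x y, ω u) + (∫ᶜ u in .segment y z, ω u) + ∫ᶜ u in .segment z x, ω u := by
  have hyz := hω.curveIntegrable_segment y z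
  have hzx := hω.curveIntegrable_segment z x
  rw [Path.triangle, curveIntegral_trans (hω.curveIntegrable_segment x y) (hyz.trans hzx),
    curveIntegral_trans hyz hzx, add_assoc]

theorem curveIntegral_triangle_swap (hω : Continuous ω) (x y z : E) :
    ∫ᶜ u in .triangle x z y, ω u = -∫ᶜ u in .triangle x y z, ω u := by
  rw [curveIntegral_triangle hω, curveIntegral_triangle hω, curveIntegral_segment_swap ω z x,
    curveIntegral_segment_swap ω y z, curveIntegral_segment_swap ω x y]
  abel

theorem exists_forall_hasFDerivAt_of_curveIntegral_triangle_eq_zero [CompleteSpace F]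
    (hω : Continuous ω)
    (h : ∀ x y z, ∫ᶜ u in .triangle x y z, ω u = 0) :
    ∃ f : E → F, ∀ x, HasFDerivAt f (ω x) x := by
  refine ⟨fun y => ∫ᶜ u in .segment 0 y, ω u, fun x => ?_⟩
  have hf : (fun y => ∫ᶜ u in .segment 0 y, ω u) =
      fun y => (∫ᶜ u in .segment 0 x, ω u) + ∫ᶜ u in .segment x y, ω u := by
    funext y
    have h0xy := h 0 x y
    rw [curveIntegral_triangle hω, curveIntegral_segment_swap ω 0 y] at h0xy
    rw [eq_comm, ← sub_eq_zero, ← h0xy, sub_eq_add_neg]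
  rw [hf]
  exact (HasFDerivAt.curveIntegral_segment_source hω).const_add _

theorem mem_uIcc_zero_or_neg_mem_of_abs_le {p q : ℝ} (h : |p| ≤ |q|) :
    p ∈ uIcc 0 q ∨ -p ∈ uIcc 0 q := by
  simp only [mem_uIcc]
  cases abs_cases p <;> cases abs_cases q <;> grind

theorem exists_curveIntegral_triangle_eq {ω : E → E →L[ℝ] ℝ} (hω : Continuous ω) (z a c : E)
    {p : ℝ} (hp : |p| ≤ |∫ᶜ u in .triangle z a c, ω u|) :
    ∃ a' c' : E, ∫ᶜ u in .triangle z a' c', ω u = p := by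
  set g : ℝ → ℝ := fun s => ∫ᶜ u in .triangle z (lineMap z a s) (lineMap z c s), ω u
  have hg : Continuous g := by
    simp only [g, curveIntegral_triangle hω]
    have hS := hω.continuous_curveIntegral_segment
    have ha : Continuous fun s : ℝ => lineMap z a s := lineMap_continuous
    have hc : Continuous fun s : ℝ => lineMap z c s := lineMap_continuous
    exact ((hS.comp (continuous_const.prodMk ha)).add (hS.comp (ha.prodMk hc))).add
      (hS.comp (hc.prodMk continuous_const))
  have hg₀ : g 0 = 0 := by
    simp only [g, curveIntegral_triangle hω]
    rw [lineMap_apply_zero, lineMap_apply_zero]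
    simp
  have hg₁ : g 1 = ∫ᶜ u in .triangle z a c, ω u := by simp [g]
  have hIVT : uIcc 0 (g 1) ⊆ g '' uIcc 0 1 := by
    simpa only [hg₀] using intermediate_value_uIcc (a := 0) (b := 1) hg.continuousOn
  rw [← hg₁] at hp
  rcases mem_uIcc_zero_or_neg_mem_of_abs_le hp with h | h
  · obtain ⟨s, -, hs⟩ := hIVT h
    exact ⟨_, _, hs⟩
  · obtain ⟨s, -, hs⟩ := hIVT h
    exact ⟨lineMap z c s, lineMap z a s, by rw [curveIntegral_triangle_swap hω, ← neg_neg p, ← hs]⟩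

end CurveIntegral

theorem exists_curveIntegral_triangle_ne_zero_of_not_exists_gradient {E : Type*}
    [NormedAddCommGroup E] [InnerProductSpace ℝ E] [CompleteSpace E] {b : E → E}
    (hb : Continuous b) (hb' : ¬ ∃ F : E → ℝ, Differentiable ℝ F ∧ ∀ x, gradient F x = b x) :
    ∃ z a c : E, ∫ᶜ u in .triangle z a c, innerSL ℝ (b u) ≠ 0 := by
  by_contra! h
  obtain ⟨F, hF⟩ :=
    exists_forall_hasFDerivAt_of_curveIntegral_triangle_eq_zero ((innerSL ℝ).continuous.comp hb) h
  have hgrad : ∀ x, HasGradientAt F (b x) x := fun x => hasGradientAt_iff_hasFDerivAt.2 (hF x)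
  exact hb' ⟨F, fun x => (hgrad x).differentiableAt, fun x => (hgrad x).gradient⟩

/-- if `b` is `C¹`, bounded with bounded derivatives and not conservative, then
there are a point `z` and a value `q̄ ≠ 0` such that every `p` with `|p| ≤ |q̄|` is realized as
the work of `b` along some closed `H¹` loop at `z` of length one. -/
theorem statement2 (n : ℕ) (b : Euc n → Euc n) (hB : AssumptionB n b) :
    ∃ (z : Euc n) (qbar : ℝ), qbar ≠ 0 ∧
      ∀ p : ℝ, |p| ≤ |qbar| →
        ∃ ξ ξ' : ℝ → Euc n, InHT n 1 z ξ ξ' ∧ ξ 1 = z ∧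
          (∫ t in (0:ℝ)..1, ⟪b (ξ t), ξ' t⟫_ℝ) = p := by
  obtain ⟨hb, -, -, hb'⟩ := hB
  have hω : Continuous fun u => innerSL ℝ (b u) := (innerSL ℝ).continuous.comp hb.continuous
  obtain ⟨z, a, c, hq⟩ :=
    exists_curveIntegral_triangle_ne_zero_of_not_exists_gradient hb.continuous hb'
  refine ⟨z, _, hq, fun p hp => ?_⟩
  obtain ⟨a', c', hp'⟩ := exists_curveIntegral_triangle_eq hω z a c hp
  refine ⟨(Path.triangle z a' c').extend, deriv (Path.triangle z a' c').extend,
    (Path.hasBoundedVelocity_triangle z a' c').inHT, Path.extend_one _, ?_⟩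
  simp only [← hp', curveIntegral_eq_intervalIntegral_deriv, innerSL_apply_apply]
end
end

section
/- Fix q ∈ ℝ, x, y ∈ ℝⁿ and T > 0. Then the set A^{xy}_T(q) is not empty, i.e. there exists φ ∈ H^x_T with φ(T) = y and L_T(φ) = q. -/
open MeasureTheory Filter Real Set
open scoped InnerProductSpace

noncomputable section

/-!
Since `b` is not a gradient, some triangle `p u v` has nonzero circulation `c` of `b`: otherwise
the work of `b` along the segment from `0` to `z` would be a potential for `b`. The circulation of
the shrunk triangle `p, p + s • (u - p), p + s • (v - p)` depends continuously on `s` and vanishes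
at `s = 0`, so by the intermediate value theorem it takes every value between `0` and `c`. Going
from `x` to `p`, winding `⌊r / c⌋` times around the triangle, once around a suitable shrunk copy,
and then from `p` to `y`, the work of `b` can be made equal to any `r`; the total time plays no
role because affine reparametrisation of a path does not change its work. Taking `r = q T / 2`
gives `L_T(φ) = q`.
-/

open Topology

section Glue

variable {α : Type*}

def glue (a : ℝ) (f g : ℝ → α) : ℝ → α := fun t => if t ≤ a then f t else g (t - a)

variable {a t : ℝ} {f g : ℝ → α}

theorem glue_of_le (h : t ≤ a) : glue a f g t = f t := if_pos h

theorem glue_of_lt (h : a < t) : glue a f g t = g (t - a) := if_neg (not_le.mpr h)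

theorem glue_comp {β : Type*} (F : α → β) :
    (fun t => F (glue a f g t)) = glue a (fun t => F (f t)) (fun t => F (g t)) := by
  funext t
  by_cases h : t ≤ a
  · simp only [glue_of_le h]
  · simp only [glue_of_lt (not_le.mp h)]

theorem glue_comp₂ {β γ : Type*} (F : α → β → γ) (f' g' : ℝ → β) :
    (fun t => F (glue a f g t) (glue a f' g' t))
      = glue a (fun t => F (f t) (f' t)) (fun t => F (g t) (g' t)) := by
  funext t
  by_cases h : t ≤ a
  · simp only [glue_of_le h]
  · simp only [glue_of_lt (not_le.mp h)]

variable {F : Type*} [NormedAddCommGroup F] {c : ℝ} {f g : ℝ → F}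

theorem intervalIntegrable_glue_left (ha : 0 ≤ a) (hf : IntervalIntegrable f volume 0 a) :
    IntervalIntegrable (glue a f g) volume 0 a :=
  hf.congr fun s hs => (glue_of_le (by rw [uIoc_of_le ha] at hs; exact hs.2)).symm

theorem intervalIntegrable_glue_right (hc : 0 ≤ c) (hg : IntervalIntegrable g volume 0 c) :
    IntervalIntegrable (glue a f g) volume a (a + c) := by
  have hg' : IntervalIntegrable (fun s => g (s - a)) volume a (a + c) := by
    simpa [add_comm c a] using hg.comp_sub_right a
  refine hg'.congr fun s hs => (glue_of_lt ?_).symm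
  rw [uIoc_of_le (by linarith)] at hs
  exact hs.1

theorem intervalIntegrable_glue (ha : 0 ≤ a) (hc : 0 ≤ c) (hf : IntervalIntegrable f volume 0 a)
    (hg : IntervalIntegrable g volume 0 c) :
    IntervalIntegrable (glue a f g) volume 0 (a + c) :=
  (intervalIntegrable_glue_left ha hf).trans (intervalIntegrable_glue_right hc hg)

variable [NormedSpace ℝ F]

theorem integral_glue_of_le (ht₀ : 0 ≤ t) (ht : t ≤ a) :
    ∫ s in (0 : ℝ)..t, glue a f g s = ∫ s in (0 : ℝ)..t, f s :=
  intervalIntegral.integral_congr fun s hs =>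
    glue_of_le (by rw [uIcc_of_le ht₀] at hs; exact hs.2.trans ht)

theorem integral_glue_of_lt (ha : 0 ≤ a) (hat : a < t) (hf : IntervalIntegrable f volume 0 a)
    (hg : IntervalIntegrable g volume 0 (t - a)) :
    ∫ s in (0 : ℝ)..t, glue a f g s = (∫ s in (0 : ℝ)..a, f s) + ∫ s in (0 : ℝ)..(t - a), g s := by
  have hright := intervalIntegrable_glue_right (f := f) (a := a) (sub_nonneg.mpr hat.le) hg
  rw [add_sub_cancel] at hright
  rw [← intervalIntegral.integral_add_adjacent_intervals
    (intervalIntegrable_glue_left ha hf) hright, integral_glue_of_le ha le_rfl]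
  have hg_shift : ∫ s in a..t, glue a f g s = ∫ s in a..t, g (s - a) :=
    intervalIntegral.integral_congr_ae (Eventually.of_forall fun s hs =>
      glue_of_lt (by rw [uIoc_of_le hat.le] at hs; exact hs.1))
  rw [hg_shift, intervalIntegral.integral_comp_sub_right, sub_self]

end Glue

section Work

variable {E : Type*} [NormedAddCommGroup E] [InnerProductSpace ℝ E] {b : E → E}

/-- `∫₀ˢ ⟪b (φ t), φ' t⟫ dt` is the work of `b` along `φ`, equal to `S / 2` times the dissipated
power; its integrand is required to be integrable so that works add up under concatenation. -/
def HasPathWithWork (b : E → E) (S : ℝ) (x z : E) (w : ℝ) : Prop :=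
  ∃ φ φ' : ℝ → E, φ 0 = x ∧ IntervalIntegrable φ' volume 0 S ∧
    IntervalIntegrable (fun t => ‖φ' t‖ ^ 2) volume 0 S ∧
    (∀ t ∈ Icc 0 S, φ t = x + ∫ s in (0 : ℝ)..t, φ' s) ∧ φ S = z ∧
    IntervalIntegrable (fun t => ⟪b (φ t), φ' t⟫_ℝ) volume 0 S ∧
    ∫ t in (0 : ℝ)..S, ⟪b (φ t), φ' t⟫_ℝ = w

def segmentWork (b : E → E) (A B : E) : ℝ :=
  ∫ t in (0 : ℝ)..1, ⟪b (A + t • (B - A)), B - A⟫_ℝ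

def triangleWork (b : E → E) (A B C : E) : ℝ :=
  segmentWork b A B + segmentWork b B C + segmentWork b C A

theorem hasPathWithWork_const (S : ℝ) (x : E) : HasPathWithWork b S x x 0 := by
  refine ⟨fun _ => x, fun _ => 0, rfl, ?_, ?_, ?_, rfl, ?_, ?_⟩ <;> simp

theorem HasPathWithWork.append {a c : ℝ} (ha : 0 < a) (hc : 0 < c) {x z y : E} {w₁ w₂ : ℝ}
    (h₁ : HasPathWithWork b a x z w₁) (h₂ : HasPathWithWork b c z y w₂) :
    HasPathWithWork b (a + c) x y (w₁ + w₂) := by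
  obtain ⟨f, f', hf0, hf'i, hf'2, hf, hfa, hfwi, hfw⟩ := h₁
  obtain ⟨g, g', -, hg'i, hg'2, hg, hgc, hgwi, hgw⟩ := h₂
  have hac : a < a + c := by linarith
  refine ⟨glue a f g, glue a f' g', by rw [glue_of_le ha.le, hf0],
    intervalIntegrable_glue ha.le hc.le hf'i hg'i, ?_, fun t ht => ?_,
    by rw [glue_of_lt hac, add_sub_cancel_left, hgc], ?_, ?_⟩
  · rw [glue_comp fun v : E => ‖v‖ ^ 2]
    exact intervalIntegrable_glue ha.le hc.le hf'2 hg'2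
  · rcases le_or_gt t a with hta | hat
    · rw [glue_of_le hta, integral_glue_of_le ht.1 hta, hf t ⟨ht.1, hta⟩]
    · have htc : t - a ∈ Icc 0 c := ⟨by linarith, by linarith [ht.2]⟩
      rw [glue_of_lt hat, integral_glue_of_lt ha.le hat hf'i (hg'i.mono_set ?_),
        hg (t - a) htc, ← hfa, hf a ⟨ha.le, le_rfl⟩, add_assoc]
      rw [uIcc_of_le htc.1, uIcc_of_le hc.le]
      exact Icc_subset_Icc le_rfl htc.2
  · rw [glue_comp₂ fun u v : E => ⟪b u, v⟫_ℝ]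
    exact intervalIntegrable_glue ha.le hc.le hfwi hgwi
  · rw [glue_comp₂ fun u v : E => ⟪b u, v⟫_ℝ,
      integral_glue_of_lt ha.le hac hfwi (by rwa [add_sub_cancel_left]), add_sub_cancel_left,
      hfw, hgw]

theorem segmentWork_swap (A B : E) : segmentWork b B A = -segmentWork b A B := by
  have hflip (t : ℝ) :
      ⟪b (B + t • (A - B)), A - B⟫_ℝ = -⟪b (A + (1 - t) • (B - A)), B - A⟫_ℝ := by
    rw [show B + t • (A - B) = A + (1 - t) • (B - A) by module, ← inner_neg_right, neg_sub]
  simp only [segmentWork, hflip, intervalIntegral.integral_neg,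
    intervalIntegral.integral_comp_sub_left (fun u => ⟪b (A + u • (B - A)), B - A⟫_ℝ) 1]
  norm_num

theorem triangleWork_swap (A B C : E) : triangleWork b A C B = -triangleWork b A B C := by
  simp only [triangleWork, segmentWork_swap A C, segmentWork_swap C B, segmentWork_swap B A]
  ring

theorem continuous_segmentWork (hb : Continuous b) {X : Type*} [TopologicalSpace X] {f g : X → E}
    (hf : Continuous f) (hg : Continuous g) : Continuous fun s => segmentWork b (f s) (g s) :=
  intervalIntegral.continuous_parametric_intervalIntegral_of_continuous'
    (f := fun s t => ⟪b (f s + t • (g s - f s)), g s - f s⟫_ℝ) (by fun_prop) 0 1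

theorem segmentWork_add_sub_inner_isLittleO (hb : Continuous b) (z : E) :
    (fun h => segmentWork b z (z + h) - ⟪b z, h⟫_ℝ) =o[𝓝 0] fun h => h := by
  have hrepr : ∀ h : E, segmentWork b z (z + h) - ⟪b z, h⟫_ℝ
      = ∫ t in (0 : ℝ)..1, ⟪b (z + t • h) - b z, h⟫_ℝ := by
    intro h
    simp only [segmentWork, add_sub_cancel_left, inner_sub_left]
    rw [intervalIntegral.integral_sub
      (((hb.comp (by fun_prop)).inner continuous_const).intervalIntegrable _ _)
      intervalIntegrable_const]
    simp
  rw [Asymptotics.isLittleO_iff]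
  intro ε hε
  obtain ⟨δ, hδ, hball⟩ := Metric.continuousAt_iff.mp hb.continuousAt ε hε
  filter_upwards [Metric.ball_mem_nhds (0 : E) hδ] with h hh
  have hbound : ∀ t ∈ uIoc (0 : ℝ) 1, ‖⟪b (z + t • h) - b z, h⟫_ℝ‖ ≤ ε * ‖h‖ := by
    intro t ht
    rw [uIoc_of_le zero_le_one] at ht
    have hdist : dist (z + t • h) z < δ := by
      rw [dist_eq_norm, add_sub_cancel_left, norm_smul, Real.norm_of_nonneg ht.1.le]
      calc t * ‖h‖ ≤ ‖h‖ := mul_le_of_le_one_left (norm_nonneg h) ht.2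
        _ < δ := mem_ball_zero_iff.mp hh
    calc ‖⟪b (z + t • h) - b z, h⟫_ℝ‖ ≤ ‖b (z + t • h) - b z‖ * ‖h‖ := norm_inner_le_norm _ _
      _ ≤ ε * ‖h‖ := by
        gcongr
        rw [← dist_eq_norm]
        exact (hball hdist).le
  rw [hrepr]
  simpa using intervalIntegral.norm_integral_le_of_norm_le_const hbound

variable [CompleteSpace E]

theorem hasPathWithWork_segment (hb : Continuous b) {S : ℝ} (hS : 0 < S) (A B : E) :
    HasPathWithWork b S A B (segmentWork b A B) := by
  refine ⟨fun t => A + (t / S) • (B - A), fun _ => S⁻¹ • (B - A), by simp, by simp, by simp,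
    fun t _ => by simp only [intervalIntegral.integral_const, sub_zero, smul_smul, div_eq_mul_inv],
    by simp [hS.ne'], ((hb.comp (by fun_prop)).inner continuous_const).intervalIntegrable _ _, ?_⟩
  simp only [real_inner_smul_right, intervalIntegral.integral_const_mul,
    intervalIntegral.integral_comp_div (fun u => ⟪b (A + u • (B - A)), B - A⟫_ℝ) hS.ne']
  simp [hS.ne', segmentWork]

theorem hasPathWithWork_triangle (hb : Continuous b) {S : ℝ} (hS : 0 < S) (A B C : E) :
    HasPathWithWork b S A A (triangleWork b A B C) := by
  have hS3 : 0 < S / 3 := by positivity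
  have h := ((hasPathWithWork_segment hb hS3 A B).append hS3 hS3
    (hasPathWithWork_segment hb hS3 B C)).append (by positivity) hS3
    (hasPathWithWork_segment hb hS3 C A)
  rwa [show S / 3 + S / 3 + S / 3 = S by ring] at h

theorem hasPathWithWork_nsmul_triangle (hb : Continuous b) (A B C : E) (m : ℕ) {S : ℝ}
    (hS : 0 < S) : HasPathWithWork b S A A (m * triangleWork b A B C) := by
  induction m generalizing S with
  | zero => simpa using hasPathWithWork_const S A
  | succ m ih =>
    have hS2 : 0 < S / 2 := by positivity
    have h := (ih hS2).append hS2 hS2 (hasPathWithWork_triangle hb hS2 A B C)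
    rw [show S / 2 + S / 2 = S by ring] at h
    convert h using 1
    push_cast
    ring

theorem hasPathWithWork_zsmul_triangle (hb : Continuous b) (A B C : E) (k : ℤ) {S : ℝ}
    (hS : 0 < S) : HasPathWithWork b S A A (k * triangleWork b A B C) := by
  obtain ⟨m, rfl | rfl⟩ := Int.eq_nat_or_neg k
  · exact_mod_cast hasPathWithWork_nsmul_triangle hb A B C m hS
  · have h := hasPathWithWork_nsmul_triangle hb A C B m hS
    rw [triangleWork_swap] at h
    convert h using 1
    push_cast
    ring

theorem hasGradientAt_segmentWork_of_triangleWork_eq_zero (hb : Continuous b)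
    (h0 : ∀ A B C, triangleWork b A B C = 0) (z : E) :
    HasGradientAt (segmentWork b 0) (b z) z := by
  rw [hasGradientAt_iff_hasFDerivAt, hasFDerivAt_iff_isLittleO_nhds_zero]
  refine (segmentWork_add_sub_inner_isLittleO hb z).congr_left fun h => ?_
  have := h0 0 z (z + h)
  rw [triangleWork, segmentWork_swap 0 (z + h)] at this
  simp only [InnerProductSpace.toDual_apply_apply]
  linarith

theorem exists_triangleWork_ne_zero (hb : Continuous b)
    (hnc : ¬ ∃ F : E → ℝ, Differentiable ℝ F ∧ ∀ x, gradient F x = b x) :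
    ∃ A B C, triangleWork b A B C ≠ 0 := by
  by_contra! h0
  have hgrad := hasGradientAt_segmentWork_of_triangleWork_eq_zero hb h0
  exact hnc ⟨segmentWork b 0, fun z => (hgrad z).differentiableAt, fun z => (hgrad z).gradient⟩

theorem hasPathWithWork_loop (hb : Continuous b) {p u v : E} (hc : triangleWork b p u v ≠ 0)
    {S : ℝ} (hS : 0 < S) (r : ℝ) : HasPathWithWork b S p p r := by
  set c := triangleWork b p u v
  set shrunk : ℝ → ℝ := fun s => triangleWork b p (p + s • (u - p)) (p + s • (v - p))
  have hcont : Continuous shrunk :=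
    ((continuous_segmentWork hb continuous_const (by fun_prop)).add
      (continuous_segmentWork hb (by fun_prop) (by fun_prop))).add
      (continuous_segmentWork hb (by fun_prop) continuous_const)
  have hθ : c * Int.fract (r / c) ∈ uIcc (shrunk 0) (shrunk 1) := by
    have h0 : shrunk 0 = 0 := by simp [shrunk, triangleWork, segmentWork]
    have h1 : shrunk 1 = c := by simp [shrunk, c]
    rw [h0, h1, ← segment_eq_uIcc]
    exact ⟨1 - Int.fract (r / c), Int.fract (r / c), by linarith [Int.fract_lt_one (r / c)],
      Int.fract_nonneg _, by ring, by simp [mul_comm]⟩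
  obtain ⟨s, -, hs⟩ := intermediate_value_uIcc hcont.continuousOn hθ
  have hS2 : 0 < S / 2 := by positivity
  have h := (hasPathWithWork_zsmul_triangle hb p u v ⌊r / c⌋ hS2).append hS2 hS2
    (hasPathWithWork_triangle hb hS2 p (p + s • (u - p)) (p + s • (v - p)))
  rw [show S / 2 + S / 2 = S by ring] at h
  convert h using 1
  change r = ⌊r / c⌋ * c + shrunk s
  rw [hs, mul_comm, ← mul_add, Int.floor_add_fract, mul_div_cancel₀ r hc]

end Work

theorem HasPathWithWork.exists_inHT_diss {n : ℕ} {b : Euc n → Euc n} {T : ℝ} {x y : Euc n}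
    {w : ℝ} (h : HasPathWithWork b T x y w) :
    ∃ φ φ' : ℝ → Euc n, InHT n T x φ φ' ∧ φ T = y ∧ Diss n b T φ φ' = 2 / T * w := by
  obtain ⟨φ, φ', h0, hi, hi2, hrep, hend, -, hw⟩ := h
  exact ⟨φ, φ', ⟨h0, hi, hi2, hrep⟩, hend, by rw [Diss, hw]⟩

theorem statement3_general (n : ℕ) (b : Euc n → Euc n) (hB : AssumptionB n b)
    (q : ℝ) (x y : Euc n) (T : ℝ) (hT : 0 < T) :
    ∃ φ φ' : ℝ → Euc n, InHT n T x φ φ' ∧ φ T = y ∧ Diss n b T φ φ' = q := by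
  obtain ⟨hC1, -, -, hnc⟩ := hB
  have hb : Continuous b := hC1.continuous
  obtain ⟨p, u, v, hc⟩ := exists_triangleWork_ne_zero hb hnc
  have hT3 : 0 < T / 3 := by positivity
  have h := ((hasPathWithWork_segment hb hT3 x p).append hT3 hT3
    (hasPathWithWork_loop hb hc hT3 (q * T / 2 - segmentWork b x p - segmentWork b p y))).append
    (by positivity) hT3 (hasPathWithWork_segment hb hT3 p y)
  rw [show T / 3 + T / 3 + T / 3 = T by ring, show segmentWork b x p + (q * T / 2
    - segmentWork b x p - segmentWork b p y) + segmentWork b p y = q * T / 2 by ring] at h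
  obtain ⟨φ, φ', hφ, hend, hdiss⟩ := h.exists_inHT_diss
  exact ⟨φ, φ', hφ, hend, by rw [hdiss]; field_simp⟩

/-- for every `q`, `x`, `y` and `T > 0`, the set `A^{xy}_T(q)` is nonempty. -/
theorem statement3 (n : ℕ) (V : Euc n → ℝ) (b : Euc n → Euc n)
    (hA : AssumptionA n V) (hB : AssumptionB n b)
    (q : ℝ) (x y : Euc n) (T : ℝ) (hT : 0 < T) :
    ∃ φ φ' : ℝ → Euc n, InHT n T x φ φ' ∧ φ T = y ∧ Diss n b T φ φ' = q :=
  statement3_general n b hB q x y T hT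
end
end

section
/- For every compact set K ⊂ ℝⁿ and every q̄ > 0, C₁ > 0 there exists C > 0 such that: for every T ≥ 1, every x ∈ K, and every φ ∈ H^x_T with |L_T(φ)| ≤ q̄ and I^x_T(φ) ≤ C₁·T, one has ∫₀^T |φ̇_t|² dt ≤ C·T and |φ(T)| ≤ C·(T + 1). -/
open MeasureTheory Filter Real Set
open scoped InnerProductSpace

noncomputable section

/-!
Expanding the square in the action, `‖φ'‖² = ‖φ' - c(φ)‖² + 2⟪c(φ), φ'⟫ - ‖c(φ)‖²`, and by the chain
rule along the absolutely continuous path `∫ ⟪c(φ), φ'⟫ = (V x - V (φ T)) / 2 + (T / 2) L_T(φ)`.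
Hence `∫ ‖φ'‖² ≤ 2 I + V x - V (φ T) + T L_T`, which is `O(T)` because `V` is bounded above on `K`
and bounded below on all of `ℝⁿ`: by (A) its radial derivative is nonnegative outside a ball, so
`V` on the whole space is no smaller than on that ball. The endpoint bound then follows from
`‖φ T‖ ≤ ‖x‖ + ∫ ‖φ'‖ ≤ ‖x‖ + (T + ∫ ‖φ'‖²) / 2`.
-/

namespace AbsolutelyContinuousOnInterval

variable {X Y : Type*} [PseudoMetricSpace X] [PseudoMetricSpace Y] {a b : ℝ}

theorem of_dist_le {f : ℝ → X} {g : ℝ → Y} (hg : AbsolutelyContinuousOnInterval g a b) (K : ℝ)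
    (hfg : ∀ s ∈ uIcc a b, ∀ t ∈ uIcc a b, dist (f s) (f t) ≤ K * dist (g s) (g t)) :
    AbsolutelyContinuousOnInterval f a b := by
  unfold AbsolutelyContinuousOnInterval at hg ⊢
  have hKg := hg.const_mul K
  rw [mul_zero] at hKg
  refine squeeze_zero' (.of_forall fun _ => Finset.sum_nonneg fun _ _ => dist_nonneg) ?_ hKg
  refine eventually_inf_principal.2 (.of_forall fun E hE => ?_)
  rw [Finset.mul_sum]
  exact Finset.sum_le_sum fun i hi => hfg _ (hE.1 i hi).1 _ (hE.1 i hi).2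

theorem _root_.LipschitzOnWith.comp_absolutelyContinuousOnInterval {f : X → Y} {g : ℝ → X}
    {K : NNReal} {s : Set X} (hf : LipschitzOnWith K f s)
    (hg : AbsolutelyContinuousOnInterval g a b) (hgs : MapsTo g (uIcc a b) s) :
    AbsolutelyContinuousOnInterval (f ∘ g) a b :=
  hg.of_dist_le K fun _ hs _ ht => hf.dist_le_mul _ (hgs hs) _ (hgs ht)

end AbsolutelyContinuousOnInterval

theorem IntervalIntegrable.absolutelyContinuousOnInterval_primitive {E : Type*}
    [NormedAddCommGroup E] [NormedSpace ℝ E] {f : ℝ → E} {a b : ℝ}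
    (hf : IntervalIntegrable f volume a b) :
    AbsolutelyContinuousOnInterval (fun t => ∫ s in a..t, f s) a b := by
  refine (hf.norm.absolutelyContinuousOnInterval_intervalIntegral left_mem_uIcc).of_dist_le 1
    fun s hs t ht => ?_
  have hfs := hf.mono_set (uIcc_subset_uIcc_left hs)
  have hft := hf.mono_set (uIcc_subset_uIcc_left ht)
  rw [one_mul, dist_eq_norm, Real.dist_eq, intervalIntegral.integral_interval_sub_left hfs hft,
    intervalIntegral.integral_interval_sub_left hfs.norm hft.norm]
  exact intervalIntegral.norm_integral_le_abs_integral_norm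

theorem ContDiff.continuous_gradient {E : Type*} [NormedAddCommGroup E] [InnerProductSpace ℝ E]
    [CompleteSpace E] {V : E → ℝ} (hV : ContDiff ℝ 1 V) : Continuous (gradient V) :=
  (InnerProductSpace.toDual ℝ E).symm.continuous.comp (hV.continuous_fderiv one_ne_zero)

/- `V (x + F)` is a Lipschitz function of the absolutely continuous primitive `F`, hence absolutely
continuous, so the fundamental theorem of calculus for absolutely continuous functions applies; by
Lebesgue differentiation its derivative is `⟪∇V (x + F t), f t⟫` almost everywhere. -/
theorem integral_inner_gradient_comp_primitive {E : Type*} [NormedAddCommGroup E]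
    [InnerProductSpace ℝ E] [FiniteDimensional ℝ E] {V : E → ℝ} (hV : ContDiff ℝ 1 V)
    {f : ℝ → E} {a b : ℝ} (hf : IntervalIntegrable f volume a b) (x : E) :
    ∫ t in a..b, ⟪gradient V (x + ∫ s in a..t, f s), f t⟫_ℝ
      = V (x + ∫ s in a..b, f s) - V x := by
  set F : ℝ → E := fun t => ∫ s in a..t, f s
  have hF := hf.absolutelyContinuousOnInterval_primitive
  obtain ⟨R, hR⟩ := hF.exists_bound
  obtain ⟨K, hK⟩ := ((hV.comp (contDiff_const.add contDiff_id)).contDiffOn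
    (s := Metric.closedBall (0 : E) R)).exists_lipschitzOnWith one_ne_zero (convex_closedBall _ _)
    (isCompact_closedBall _ _)
  have hVF := hK.comp_absolutelyContinuousOnInterval hF
    fun t ht => mem_closedBall_zero_iff.2 (hR t ht)
  have hderiv : ∀ᵐ t, t ∈ uIoc a b →
      deriv (fun t => V (x + F t)) t = ⟪gradient V (x + F t), f t⟫_ℝ := by
    filter_upwards [hf.ae_hasDerivAt_integral] with t ht htab
    have hFt := ht (uIoc_subset_uIcc htab) a left_mem_uIcc
    exact ((hV.differentiable one_ne_zero _).hasGradientAt.hasFDerivAt.comp_hasDerivAt t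
      (hFt.const_add x)).deriv
  rw [← intervalIntegral.integral_congr_ae hderiv]
  simpa [F, Function.comp_def] using hVF.integral_deriv_eq_sub

section Coercive

variable {E : Type*} [NormedAddCommGroup E] [InnerProductSpace ℝ E] {V : E → ℝ}

theorem apply_smul_le_of_inner_gradient_nonneg [CompleteSpace E] (hV : Differentiable ℝ V) {R : ℝ}
    (hR : ∀ y, R ≤ ‖y‖ → 0 ≤ ⟪gradient V y, y⟫_ℝ) {z : E} {a : ℝ} (ha : 0 < a) (ha1 : a ≤ 1)
    (haz : R ≤ a * ‖z‖) : V (a • z) ≤ V z := by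
  have hderiv : ∀ s : ℝ, HasDerivAt (fun s : ℝ => V (s • z)) ⟪gradient V (s • z), z⟫_ℝ s :=
    fun s => (hV _).hasGradientAt.hasFDerivAt.comp_hasDerivAt s
      ((hasDerivAt_id s).smul_const z |>.congr_deriv (one_smul ℝ z))
  have hmono : MonotoneOn (fun s : ℝ => V (s • z)) (Icc a 1) := by
    refine monotoneOn_of_deriv_nonneg (convex_Icc a 1)
      (fun s _ => (hderiv s).continuousAt.continuousWithinAt)
      (fun s _ => (hderiv s).differentiableAt.differentiableWithinAt) fun s hs => ?_
    rw [interior_Icc] at hs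
    have hs0 : 0 < s := ha.trans hs.1
    have hRs : R ≤ ‖s • z‖ := by
      rw [norm_smul, Real.norm_of_nonneg hs0.le]
      exact haz.trans (mul_le_mul_of_nonneg_right hs.1.le (norm_nonneg z))
    have := hR _ hRs
    rw [real_inner_smul_right] at this
    rw [(hderiv s).deriv]
    exact nonneg_of_mul_nonneg_right (by linarith) hs0
  simpa using hmono ⟨le_rfl, ha1⟩ ⟨ha1, le_rfl⟩ ha1

variable [FiniteDimensional ℝ E]

theorem exists_inner_gradient_nonneg_of_tendsto
    (hV : Tendsto (fun x => ⟪gradient V x, x⟫_ℝ / ‖x‖) (cocompact E) atTop) :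
    ∃ R > 0, ∀ y, R ≤ ‖y‖ → 0 ≤ ⟪gradient V y, y⟫_ℝ := by
  have hev := hV.eventually_ge_atTop 0
  rw [← Metric.cobounded_eq_cocompact, ← comap_norm_atTop, eventually_comap,
    eventually_atTop] at hev
  obtain ⟨R, hR⟩ := hev
  refine ⟨max R 1, by positivity, fun y hy => ?_⟩
  have hy0 : 0 < ‖y‖ := by linarith [le_max_right R 1]
  simpa using (le_div_iff₀ hy0).1 (hR _ ((le_max_left R 1).trans hy) y rfl)

theorem bddBelow_range_of_tendsto_inner_gradient (hV : Differentiable ℝ V)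
    (hcoer : Tendsto (fun x => ⟪gradient V x, x⟫_ℝ / ‖x‖) (cocompact E) atTop) :
    BddBelow (range V) := by
  obtain ⟨R, hR0, hR⟩ := exists_inner_gradient_nonneg_of_tendsto hcoer
  obtain ⟨m, hm⟩ := (isCompact_closedBall (0 : E) R).bddBelow_image hV.continuous.continuousOn
  refine ⟨m, forall_mem_range.2 fun z => ?_⟩
  by_cases hz : ‖z‖ ≤ R
  · exact hm ⟨z, mem_closedBall_zero_iff.2 hz, rfl⟩
  have hz0 : 0 < ‖z‖ := hR0.trans (not_le.1 hz)
  have hball : (R / ‖z‖) • z ∈ Metric.closedBall (0 : E) R := by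
    rw [mem_closedBall_zero_iff, norm_smul, Real.norm_of_nonneg (by positivity),
      div_mul_cancel₀ _ hz0.ne']
  calc m ≤ V ((R / ‖z‖) • z) := hm ⟨_, hball, rfl⟩
    _ ≤ V z := apply_smul_le_of_inner_gradient_nonneg hV hR (by positivity)
        ((div_le_one hz0).2 (not_le.1 hz).le) (div_mul_cancel₀ _ hz0.ne').ge

end Coercive

theorem IntervalIntegrable.continuousOn_inner {E : Type*} [NormedAddCommGroup E]
    [InnerProductSpace ℝ E] {f g : ℝ → E} {a b : ℝ} (hf : IntervalIntegrable f volume a b)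
    (hg : ContinuousOn g (uIcc a b)) :
    IntervalIntegrable (fun t => ⟪g t, f t⟫_ℝ) volume a b := by
  rw [intervalIntegrable_iff] at hf ⊢
  obtain ⟨C, hC⟩ := isCompact_uIcc.exists_bound_of_continuousOn hg
  exact (innerSL ℝ).integrable_of_bilin_of_bdd_left C
    ((hg.mono uIoc_subset_uIcc).aestronglyMeasurable measurableSet_uIoc)
    (ae_restrict_of_forall_mem measurableSet_uIoc fun t ht => hC t (uIoc_subset_uIcc ht)) hf

namespace InHT

variable {n : ℕ} {T : ℝ} {x : Euc n} {φ φ' : ℝ → Euc n}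

theorem eqOn_primitive (hT : 0 ≤ T) (h : InHT n T x φ φ') :
    EqOn φ (fun t => x + ∫ s in (0 : ℝ)..t, φ' s) (uIcc 0 T) := by
  rw [uIcc_of_le hT]
  exact h.2.2.2

theorem continuousOn (hT : 0 ≤ T) (h : InHT n T x φ φ') : ContinuousOn φ (uIcc 0 T) :=
  (h.2.1.absolutelyContinuousOnInterval_primitive.continuousOn.const_add x).congr
    (h.eqOn_primitive hT)

theorem integral_inner_gradient {V : Euc n → ℝ} (hV : ContDiff ℝ 1 V) (hT : 0 ≤ T)
    (h : InHT n T x φ φ') :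
    ∫ t in (0 : ℝ)..T, ⟪gradient V (φ t), φ' t⟫_ℝ = V (φ T) - V x := by
  rw [intervalIntegral.integral_congr fun t ht => by rw [h.eqOn_primitive hT ht],
    h.eqOn_primitive hT right_mem_uIcc]
  exact integral_inner_gradient_comp_primitive hV h.2.1 x

theorem norm_endpoint_le (hT : 0 ≤ T) (h : InHT n T x φ φ') :
    ‖φ T‖ ≤ ‖x‖ + (T + ∫ t in (0 : ℝ)..T, ‖φ' t‖ ^ 2) / 2 := by
  have hbound : ∫ t in (0 : ℝ)..T, ‖φ' t‖ ≤ ∫ t in (0 : ℝ)..T, (1 + ‖φ' t‖ ^ 2) / 2 :=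
    intervalIntegral.integral_mono_on hT h.2.1.norm
      ((intervalIntegrable_const.add h.2.2.1).div_const 2)
      fun t _ => by nlinarith [sq_nonneg (‖φ' t‖ - 1)]
  rw [intervalIntegral.integral_div, intervalIntegral.integral_add intervalIntegrable_const
    h.2.2.1, intervalIntegral.integral_const, smul_eq_mul, mul_one, sub_zero] at hbound
  calc ‖φ T‖ = ‖x + ∫ t in (0 : ℝ)..T, φ' t‖ := by rw [h.eqOn_primitive hT right_mem_uIcc]
    _ ≤ ‖x‖ + ∫ t in (0 : ℝ)..T, ‖φ' t‖ :=
      (norm_add_le _ _).trans (by gcongr; exact intervalIntegral.norm_integral_le_integral_norm hT)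
    _ ≤ _ := by linarith

theorem integral_norm_sq_le {V : Euc n → ℝ} {b c : Euc n → Euc n} (hV : ContDiff ℝ 1 V)
    (hb : Continuous b) (hc : ∀ z, c z = -(1 / 2 : ℝ) • gradient V z + b z) (hT : 0 < T)
    (h : InHT n T x φ φ') :
    ∫ t in (0 : ℝ)..T, ‖φ' t‖ ^ 2 ≤ 2 * FW n c T φ φ' + (V x - V (φ T)) + T * Diss n b T φ φ' := by
  have hφ := h.continuousOn hT.le
  have hgradV : Continuous (gradient V) := hV.continuous_gradient
  have hcont : Continuous c := by
    rw [funext hc]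
    exact (hgradV.const_smul (-(1 / 2 : ℝ))).add hb
  have hcφ : ContinuousOn (fun t => c (φ t)) (uIcc 0 T) := hcont.comp_continuousOn hφ
  have hcφ' := h.2.1.continuousOn_inner hcφ
  have hcsq : IntervalIntegrable (fun t => ‖c (φ t)‖ ^ 2) volume 0 T :=
    (hcφ.norm.pow 2).intervalIntegrable
  have hexpand : ∫ t in (0 : ℝ)..T, ‖φ' t - c (φ t)‖ ^ 2 = (∫ t in (0 : ℝ)..T, ‖φ' t‖ ^ 2)
      - 2 * (∫ t in (0 : ℝ)..T, ⟪c (φ t), φ' t⟫_ℝ) + ∫ t in (0 : ℝ)..T, ‖c (φ t)‖ ^ 2 := by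
    rw [← intervalIntegral.integral_const_mul, ← intervalIntegral.integral_sub h.2.2.1
      (hcφ'.const_mul 2), ← intervalIntegral.integral_add (h.2.2.1.sub (hcφ'.const_mul 2)) hcsq]
    congr 1 with t
    rw [norm_sub_sq_real, real_inner_comm]
  have hcross : 2 * ∫ t in (0 : ℝ)..T, ⟪c (φ t), φ' t⟫_ℝ = V x - V (φ T) + T * Diss n b T φ φ' := by
    have hgφ' : IntervalIntegrable (fun t => ⟪gradient V (φ t), φ' t⟫_ℝ) volume 0 T :=
      h.2.1.continuousOn_inner (hgradV.comp_continuousOn hφ)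
    have hbφ' : IntervalIntegrable (fun t => ⟪b (φ t), φ' t⟫_ℝ) volume 0 T :=
      h.2.1.continuousOn_inner (hb.comp_continuousOn hφ)
    simp only [hc, inner_add_left, real_inner_smul_left]
    rw [intervalIntegral.integral_add (hgφ'.const_mul _) hbφ', intervalIntegral.integral_const_mul,
      h.integral_inner_gradient hV hT.le, Diss]
    field_simp
    ring
  have hcsq_nonneg : 0 ≤ ∫ t in (0 : ℝ)..T, ‖c (φ t)‖ ^ 2 :=
    intervalIntegral.integral_nonneg hT.le fun t _ => sq_nonneg _
  rw [FW]
  linarith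

end InHT

theorem statement12_general (n : ℕ) (V : Euc n → ℝ) (b c : Euc n → Euc n)
    (hA : AssumptionA n V) (hb : ContDiff ℝ 1 b)
    (hc : ∀ z, c z = -(1/2 : ℝ) • gradient V z + b z)
    (K : Set (Euc n)) (hK : IsCompact K)
    (qbar C₁ : ℝ) (hqbar : 0 < qbar) (hC₁ : 0 < C₁) :
    ∃ C : ℝ, 0 < C ∧ ∀ T : ℝ, 1 ≤ T → ∀ x ∈ K, ∀ φ φ' : ℝ → Euc n,
      InHT n T x φ φ' → |Diss n b T φ φ'| ≤ qbar → FW n c T φ φ' ≤ C₁ * T →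
      (∫ t in (0:ℝ)..T, ‖φ' t‖ ^ 2) ≤ C * T ∧ ‖φ T‖ ≤ C * (T + 1) := by
  have hV : ContDiff ℝ 1 V := hA.1.of_le (by norm_num)
  obtain ⟨m, hm⟩ := bddBelow_range_of_tendsto_inner_gradient (hV.differentiable one_ne_zero) hA.2
  obtain ⟨M, hM⟩ := hK.bddAbove_image hV.continuous.continuousOn
  obtain ⟨R, hR⟩ := hK.isBounded.exists_norm_le
  set D := 2 * C₁ + qbar + |M - m|
  have hD : 0 ≤ D := by positivity
  refine ⟨D + |R| + 1, by positivity, fun T hT x hx φ φ' h hDiss hFW => ?_⟩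
  have hVx : V x - V (φ T) ≤ |M - m| :=
    (sub_le_sub (hM ⟨x, hx, rfl⟩) (hm ⟨φ T, rfl⟩)).trans (le_abs_self _)
  have hE : ∫ t in (0:ℝ)..T, ‖φ' t‖ ^ 2 ≤ D * T :=
    calc _ ≤ 2 * FW n c T φ φ' + (V x - V (φ T)) + T * Diss n b T φ φ' :=
          h.integral_norm_sq_le hV hb.continuous hc (by linarith)
      _ ≤ 2 * (C₁ * T) + |M - m| + T * qbar := by
          gcongr
          exact (le_abs_self _).trans hDiss
      _ ≤ D * T := by nlinarith [abs_nonneg (M - m)]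
  refine ⟨hE.trans (by nlinarith [abs_nonneg R]), ?_⟩
  calc ‖φ T‖ ≤ ‖x‖ + (T + ∫ t in (0:ℝ)..T, ‖φ' t‖ ^ 2) / 2 := h.norm_endpoint_le (by linarith)
    _ ≤ |R| + (T + D * T) / 2 := by grw [hR x hx, le_abs_self R, hE]
    _ ≤ (D + |R| + 1) * (T + 1) := by nlinarith [abs_nonneg R]

/-- a priori bound on the kinetic energy and on the endpoint of paths with
bounded dissipated power and action bounded by `C₁·T`. -/
theorem statement12 (n : ℕ) (V : Euc n → ℝ) (b c : Euc n → Euc n)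
    (hA : AssumptionA n V) (hb : ContDiff ℝ 1 b)
    (hbB : ∃ M : ℝ, ∀ z, ‖b z‖ ≤ M) (hbD : ∃ M : ℝ, ∀ z, ‖fderiv ℝ b z‖ ≤ M)
    (hc : ∀ z, c z = -(1/2 : ℝ) • gradient V z + b z)
    (K : Set (Euc n)) (hK : IsCompact K)
    (qbar C₁ : ℝ) (hqbar : 0 < qbar) (hC₁ : 0 < C₁) :
    ∃ C : ℝ, 0 < C ∧ ∀ T : ℝ, 1 ≤ T → ∀ x ∈ K, ∀ φ φ' : ℝ → Euc n,
      InHT n T x φ φ' → |Diss n b T φ φ'| ≤ qbar → FW n c T φ φ' ≤ C₁ * T →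
      (∫ t in (0:ℝ)..T, ‖φ' t‖ ^ 2) ≤ C * T ∧ ‖φ T‖ ≤ C * (T + 1) :=
  statement12_general n V b c hA hb hc K hK qbar C₁ hqbar hC₁
end
end

section
/- There exists R₀ > 0 such that the hitting time of the closed ball K = {x : |x| ≤ R₀} by solutions of the ODE ẋ = c(x) is sublinear in the initial condition: for every ε > 0 there exists M > 0 such that for every y ∈ ℝⁿ with |y| ≥ M and every differentiable curve x: [0,∞) → ℝⁿ with x(0) = y and x′(t) = c(x(t)) for all t ≥ 0, there exists a time t ≤ ε·|y| with |x(t)| ≤ R₀. -/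
/-!
Outside a large ball the drift points inwards: by (A) and the boundedness of `b`,
`⟪c x, x⟫ ≤ -C ‖x‖` for `‖x‖` large, for any prescribed `C`, so `‖x(t)‖` decreases at rate at
least `C` there. With `C = 2 / ε` the solution reaches a radius `R₂ = R₂(ε)` within time
`ε ‖y‖ / 2`; with `C = 1` it then descends from `R₂` to a fixed radius `R₁` within time
`R₂ - R₁`, which is at most `ε ‖y‖ / 2` once `‖y‖ ≥ 2 R₂ / ε`.
-/

open MeasureTheory Filter Real Set
open scoped InnerProductSpace

noncomputable section

theorem HasDerivAt.norm_of_ne_zero {F : Type*} [NormedAddCommGroup F] [InnerProductSpace ℝ F]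
    {f : ℝ → F} {f' : F} {t : ℝ} (hf : HasDerivAt f f' t) (h0 : f t ≠ 0) :
    HasDerivAt (‖f ·‖) (⟪f t, f'⟫_ℝ / ‖f t‖) t := by
  have hsq : ‖f t‖ ^ 2 ≠ 0 := by positivity
  convert hf.norm_sq.sqrt hsq using 1
  · funext s
    exact (Real.sqrt_sq (norm_nonneg _)).symm
  · rw [Real.sqrt_sq (norm_nonneg _)]
    ring

theorem exists_le_of_hasDerivAt_le_neg {g : ℝ → ℝ} {a T R K : ℝ} (hT : 0 ≤ T)
    (hg : ∀ t ∈ Icc a (a + T), R < g t → ∃ d, HasDerivAt g d t ∧ d ≤ -K)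
    (hga : g a ≤ R + K * T) :
    ∃ t ∈ Icc a (a + T), g t ≤ R := by
  by_contra! habove
  choose! d hd hdK using fun t ht => hg t ht (habove t ht)
  have hcont : ContinuousOn g (Icc a (a + T)) := fun t ht =>
    (hd t ht).continuousAt.continuousWithinAt
  have hdiff : DifferentiableOn ℝ g (interior (Icc a (a + T))) := fun t ht =>
    (hd t (interior_subset ht)).differentiableAt.differentiableWithinAt
  have hderiv : ∀ t ∈ interior (Icc a (a + T)), deriv g t ≤ -K := fun t ht => by
    rw [(hd t (interior_subset ht)).deriv]
    exact hdK t (interior_subset ht)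
  have hend := (convex_Icc a (a + T)).image_sub_le_mul_sub_of_deriv_le hcont hdiff hderiv
    a (left_mem_Icc.2 (by linarith)) (a + T) (right_mem_Icc.2 (by linarith)) (by linarith)
  linarith [habove (a + T) (right_mem_Icc.2 (by linarith))]

theorem eventually_inner_le_neg_mul_norm {E : Type*} [NormedAddCommGroup E]
    [InnerProductSpace ℝ E] [ProperSpace E] {G b c : E → E}
    (hG : Tendsto (fun x => ⟪G x, x⟫_ℝ / ‖x‖) (cocompact E) atTop)
    (hb : ∃ M : ℝ, ∀ z, ‖b z‖ ≤ M) (hc : ∀ z, c z = -(1/2 : ℝ) • G z + b z) (C : ℝ) :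
    ∀ᶠ r in atTop, ∀ x : E, r ≤ ‖x‖ → ⟪c x, x⟫_ℝ ≤ -C * ‖x‖ := by
  obtain ⟨M, hM⟩ := hb
  rw [← Metric.cobounded_eq_cocompact, ← comap_norm_atTop] at hG
  obtain ⟨r, hr⟩ := eventually_atTop.1 <|
    eventually_comap.1 (hG.eventually (eventually_ge_atTop (2 * (C + M))))
  filter_upwards [eventually_ge_atTop r, eventually_gt_atTop 0] with s hrs hs x hx
  have hxpos : 0 < ‖x‖ := hs.trans_le hx
  have hGx : 2 * (C + M) * ‖x‖ ≤ ⟪G x, x⟫_ℝ :=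
    (le_div_iff₀ hxpos).1 (hr _ (hrs.trans hx) x rfl)
  have hbx : ⟪b x, x⟫_ℝ ≤ M * ‖x‖ :=
    (real_inner_le_norm _ _).trans (mul_le_mul_of_nonneg_right (hM x) (norm_nonneg x))
  rw [hc, inner_add_left, real_inner_smul_left]
  linarith

theorem statement13_general (n : ℕ) (V : Euc n → ℝ) (b c : Euc n → Euc n)
    (hA : AssumptionA n V)
    (hbB : ∃ M : ℝ, ∀ z, ‖b z‖ ≤ M)
    (hc : ∀ z, c z = -(1/2 : ℝ) • gradient V z + b z) :
    ∃ R₀ : ℝ, 0 < R₀ ∧ ∀ ε : ℝ, 0 < ε → ∃ M : ℝ, 0 < M ∧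
      ∀ y : Euc n, M ≤ ‖y‖ →
        ∀ γ : ℝ → Euc n, γ 0 = y → (∀ t : ℝ, 0 ≤ t → HasDerivAt γ (c (γ t)) t) →
          ∃ t : ℝ, 0 ≤ t ∧ t ≤ ε * ‖y‖ ∧ ‖γ t‖ ≤ R₀ := by
  have inward := eventually_inner_le_neg_mul_norm hA.2 hbB hc
  obtain ⟨R₁, hR₁, hR₁pos⟩ := ((inward 1).and (eventually_gt_atTop 0)).exists
  refine ⟨R₁, hR₁pos, fun ε hε => ?_⟩
  obtain ⟨R₂, hR₂, hR₁₂⟩ := ((inward (2 / ε)).and (eventually_ge_atTop R₁)).exists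
  refine ⟨2 * R₂ / ε, div_pos (by linarith) hε, fun y hy γ hγ0 hγ => ?_⟩
  have decay : ∀ C R, 0 < R → (∀ x : Euc n, R ≤ ‖x‖ → ⟪c x, x⟫_ℝ ≤ -C * ‖x‖) →
      ∀ t, 0 ≤ t → R < ‖γ t‖ → ∃ d, HasDerivAt (‖γ ·‖) d t ∧ d ≤ -C := by
    intro C R hR hCR t ht hRt
    have hpos : 0 < ‖γ t‖ := hR.trans hRt
    refine ⟨_, (hγ t ht).norm_of_ne_zero (norm_pos_iff.1 hpos), ?_⟩
    rw [div_le_iff₀ hpos, real_inner_comm]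
    linarith [hCR (γ t) hRt.le]
  have hR₂y : R₂ ≤ ε * ‖y‖ / 2 := by
    rw [div_le_iff₀ hε] at hy
    linarith
  obtain ⟨t₁, ⟨ht₁0, ht₁⟩, hγt₁⟩ :=
    exists_le_of_hasDerivAt_le_neg (a := 0) (T := ε * ‖y‖ / 2) (by positivity)
      (fun t ht => decay _ _ (hR₁pos.trans_le hR₁₂) hR₂ t ht.1)
      (by rw [hγ0]; field_simp; linarith)
  obtain ⟨t₂, ⟨ht₁₂, ht₂⟩, hγt₂⟩ :=
    exists_le_of_hasDerivAt_le_neg (a := t₁) (T := R₂ - R₁) (by linarith)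
      (fun t ht => decay _ _ hR₁pos hR₁ t (ht₁0.trans ht.1)) (by linarith)
  exact ⟨t₂, ht₁0.trans ht₁₂, by linarith, hγt₂⟩

/-- there is `R₀ > 0` such that the hitting time of the ball of radius `R₀`
by solutions of `ẋ = c(x)` is sublinear in the initial condition. -/
theorem statement13 (n : ℕ) (V : Euc n → ℝ) (b c : Euc n → Euc n)
    (hA : AssumptionA n V) (hb : ContDiff ℝ 1 b)
    (hbB : ∃ M : ℝ, ∀ z, ‖b z‖ ≤ M) (hbD : ∃ M : ℝ, ∀ z, ‖fderiv ℝ b z‖ ≤ M)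
    (hc : ∀ z, c z = -(1/2 : ℝ) • gradient V z + b z) :
    ∃ R₀ : ℝ, 0 < R₀ ∧ ∀ ε : ℝ, 0 < ε → ∃ M : ℝ, 0 < M ∧
      ∀ y : Euc n, M ≤ ‖y‖ →
        ∀ γ : ℝ → Euc n, γ 0 = y → (∀ t : ℝ, 0 ≤ t → HasDerivAt γ (c (γ t)) t) →
          ∃ t : ℝ, 0 ≤ t ∧ t ≤ ε * ‖y‖ ∧ ‖γ t‖ ≤ R₀ :=
  statement13_general n V b c hA hbB hc
end
end

section
/- For λ ∈ ℝ define on smooth compactly supported functions the operator A_λ f(x) := (1/2)Δf(x) − (1/2)⟨∇V(x), ∇f(x)⟩ + (1+2λ)⟨b(x), ∇f(x)⟩ + U_λ(x)·f(x), where U_λ(x) := 2λ(1+λ)|b(x)|² + λ·(∇·b)(x). Then the formal adjoint in L²(ℝⁿ, e^{−V(x)}dx) of A_λ is A_{−1−λ}: for every λ ∈ ℝ and all f, g ∈ C_c^∞(ℝⁿ), ∫_{ℝⁿ} (A_λ f)(x)·g(x)·e^{−V(x)} dx = ∫_{ℝⁿ} f(x)·(A_{−1−λ} g)(x)·e^{−V(x)}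 dx. -/
open MeasureTheory Filter Real Set
open scoped InnerProductSpace

noncomputable section

/-- The Laplacian `Δf` of a scalar function on `ℝⁿ`, as the sum of the second partial
derivatives in the coordinate directions. -/
def lap (n : ℕ) (f : Euc n → ℝ) (x : Euc n) : ℝ :=
  ∑ i : Fin n,
    fderiv ℝ (fun y => fderiv ℝ f y (EuclideanSpace.single i 1)) x (EuclideanSpace.single i 1)

/-- The divergence `∇·b` of a vector field on `ℝⁿ`. -/
def divg (n : ℕ) (b : Euc n → Euc n) (x : Euc n) : ℝ :=
  ∑ i : Fin n, ⟪fderiv ℝ b x (EuclideanSpace.single i 1), EuclideanSpace.single i 1⟫_ℝ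

/-- The potential `U_λ(x) = 2λ(1+λ)|b(x)|² + λ·(∇·b)(x)`. -/
def Upot (n : ℕ) (b : Euc n → Euc n) (lam : ℝ) (x : Euc n) : ℝ :=
  2 * lam * (1 + lam) * ‖b x‖ ^ 2 + lam * divg n b x

/-- The operator
`A_λ f = (1/2)Δf - (1/2)⟨∇V, ∇f⟩ + (1+2λ)⟨b, ∇f⟩ + U_λ·f`. -/
def Aop (n : ℕ) (V : Euc n → ℝ) (b : Euc n → Euc n) (lam : ℝ) (f : Euc n → ℝ)
    (x : Euc n) : ℝ :=
  (1/2) * lap n f x - (1/2) * ⟪gradient V x, gradient f x⟫_ℝ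
    + (1 + 2 * lam) * ⟪b x, gradient f x⟫_ℝ + Upot n b lam x * f x


theorem aux_int_fderiv_zero (n : ℕ) (h : Euc n → ℝ) (h1 : ContDiff ℝ 1 h)
    (hs : HasCompactSupport h) (v : Euc n) :
    ∫ x : Euc n, fderiv ℝ h x v = 0 := by
  obtain ⟨C, hC⟩ := h1.lipschitzWith_of_hasCompactSupport hs one_ne_zero
  have key := LipschitzWith.integral_lineDeriv_mul_eq (μ := (volume : Measure (Euc n)))
    (f := fun _ => (1:ℝ)) (g := h) (LipschitzWith.const (1:ℝ)) hC hs (-v)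
  simp only [lineDeriv, deriv_const, zero_mul, integral_zero, neg_neg, mul_one] at key
  rw [show (∫ x : Euc n, fderiv ℝ h x v)
      = ∫ x : Euc n, lineDeriv ℝ h x v from by
    congr 1; ext x; exact ((h1.differentiable one_ne_zero x).lineDeriv_eq_fderiv).symm]
  simp only [lineDeriv]
  exact key.symm

theorem aux_grad_coord (n : ℕ) (u : Euc n → ℝ) (x : Euc n) (i : Fin n) :
    gradient u x i = fderiv ℝ u x (EuclideanSpace.single i 1) := by
  have : ⟪gradient u x, EuclideanSpace.single i (1:ℝ)⟫_ℝ
      = fderiv ℝ u x (EuclideanSpace.single i 1) := by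
    simp [gradient, InnerProductSpace.toDual_symm_apply]
  rw [← this, EuclideanSpace.inner_single_right]; simp

theorem aux_grad_inner (n : ℕ) (u w : Euc n → ℝ) (x : Euc n) :
    ⟪gradient u x, gradient w x⟫_ℝ
      = ∑ i, fderiv ℝ u x (EuclideanSpace.single i 1) * fderiv ℝ w x (EuclideanSpace.single i 1) := by
  rw [show ⟪gradient u x, gradient w x⟫_ℝ = ∑ i, gradient u x i * gradient w x i from by
    rw [PiLp.inner_apply]; simp [mul_comm]]
  exact Finset.sum_congr rfl fun i _ => by rw [aux_grad_coord, aux_grad_coord]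

theorem aux_b_inner (n : ℕ) (c : Euc n) (w : Euc n → ℝ) (x : Euc n) :
    ⟪c, gradient w x⟫_ℝ = ∑ i, c i * fderiv ℝ w x (EuclideanSpace.single i 1) := by
  rw [show ⟪c, gradient w x⟫_ℝ = ∑ i, c i * gradient w x i from by
    rw [PiLp.inner_apply]; simp [mul_comm]]
  exact Finset.sum_congr rfl fun i _ => by rw [aux_grad_coord]

theorem aux_bV_inner (n : ℕ) (u : Euc n → ℝ) (c : Euc n) (x : Euc n) :
    ⟪gradient u x, c⟫_ℝ = ∑ i, fderiv ℝ u x (EuclideanSpace.single i 1) * c i := by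
  rw [show ⟪gradient u x, c⟫_ℝ = ∑ i, gradient u x i * c i from by
    rw [PiLp.inner_apply]; simp [mul_comm]]
  exact Finset.sum_congr rfl fun i _ => by rw [aux_grad_coord]

theorem aux_sum_split {ι : Type*} (s : Finset ι) (c1 c2 c3 c4 c5 c6 c7 c8 : ℝ)
    (A B C D E F G H : ι → ℝ) :
    ∑ i ∈ s, (c1 * A i + c2 * B i + c3 * C i + c4 * D i + c5 * E i + c6 * F i + c7 * G i + c8 * H i)
      = c1 * ∑ i ∈ s, A i + c2 * ∑ i ∈ s, B i + c3 * ∑ i ∈ s, C i + c4 * ∑ i ∈ s, D i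
        + c5 * ∑ i ∈ s, E i + c6 * ∑ i ∈ s, F i + c7 * ∑ i ∈ s, G i + c8 * ∑ i ∈ s, H i := by
  simp [Finset.sum_add_distrib, Finset.mul_sum]

theorem aux_fd (n : ℕ) (V : Euc n → ℝ) (b : Euc n → Euc n) (f g : Euc n → ℝ) (lam : ℝ)
    (hV : ContDiff ℝ 2 V) (hb : ContDiff ℝ 1 b)
    (hf : ContDiff ℝ (⊤ : ℕ∞) f) (hg : ContDiff ℝ (⊤ : ℕ∞) g) (i : Fin n) (x : Euc n) :
    fderiv ℝ (fun y => Real.exp (-V y) *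
      ((1/2) * (g y * fderiv ℝ f y (EuclideanSpace.single i 1)
              - f y * fderiv ℝ g y (EuclideanSpace.single i 1))
       + (1+2*lam) * (f y * (g y * b y i)))) x (EuclideanSpace.single i 1)
    = (-(1/2) * g x * Real.exp (-V x)) *
        (fderiv ℝ V x (EuclideanSpace.single i 1) * fderiv ℝ f x (EuclideanSpace.single i 1))
      + ((1/2) * f x * Real.exp (-V x)) *
        (fderiv ℝ V x (EuclideanSpace.single i 1) * fderiv ℝ g x (EuclideanSpace.single i 1))
      + (-(1+2*lam) * f x * g x * Real.exp (-V x)) *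
        (fderiv ℝ V x (EuclideanSpace.single i 1) * b x i)
      + ((1/2) * g x * Real.exp (-V x)) *
        (fderiv ℝ (fun y => fderiv ℝ f y (EuclideanSpace.single i 1)) x (EuclideanSpace.single i 1))
      + (-(1/2) * f x * Real.exp (-V x)) *
        (fderiv ℝ (fun y => fderiv ℝ g y (EuclideanSpace.single i 1)) x (EuclideanSpace.single i 1))
      + ((1+2*lam) * g x * Real.exp (-V x)) *
        (b x i * fderiv ℝ f x (EuclideanSpace.single i 1))
      + ((1+2*lam) * f x * Real.exp (-V x)) *
        (b x i * fderiv ℝ g x (EuclideanSpace.single i 1))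
      + ((1+2*lam) * f x * g x * Real.exp (-V x)) *
        (fderiv ℝ b x (EuclideanSpace.single i 1) i) := by
  set e : Euc n := EuclideanSpace.single i 1
  have dV : DifferentiableAt ℝ V x := (hV.differentiable (by norm_num)) x
  have HE : HasFDerivAt (fun y => Real.exp (-V y))
      (Real.exp (-V x) • (-(fderiv ℝ V x))) x :=
    (Real.hasDerivAt_exp (-V x)).comp_hasFDerivAt (f := fun y => -V y) x dV.hasFDerivAt.neg
  have Hf : HasFDerivAt f (fderiv ℝ f x) x := ((hf.differentiable (by simp)) x).hasFDerivAt
  have Hg : HasFDerivAt g (fderiv ℝ g x) x := ((hg.differentiable (by simp)) x).hasFDerivAt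
  have hfi : ContDiff ℝ (⊤ : ℕ∞) (fun y => fderiv ℝ f y e) :=
    (hf.fderiv_right (by simp)).clm_apply contDiff_const
  have hgi : ContDiff ℝ (⊤ : ℕ∞) (fun y => fderiv ℝ g y e) :=
    (hg.fderiv_right (by simp)).clm_apply contDiff_const
  have Hfi : HasFDerivAt (fun y => fderiv ℝ f y e)
      (fderiv ℝ (fun y => fderiv ℝ f y e) x) x := ((hfi.differentiable (by simp)) x).hasFDerivAt
  have Hgi : HasFDerivAt (fun y => fderiv ℝ g y e)
      (fderiv ℝ (fun y => fderiv ℝ g y e) x) x := ((hgi.differentiable (by simp)) x).hasFDerivAt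
  have Hbi' := (EuclideanSpace.proj (𝕜 := ℝ) i).hasFDerivAt.comp x
    ((hb.differentiable one_ne_zero) x).hasFDerivAt
  simp only [Function.comp_def, PiLp.proj_apply] at Hbi'
  have Hbi : HasFDerivAt (fun y => b y i)
      ((EuclideanSpace.proj i).comp (fderiv ℝ b x)) x := Hbi'
  have HK := ((((Hg.mul Hfi).sub (Hf.mul Hgi)).const_mul (1/2)).add
      ((Hf.mul (Hg.mul Hbi)).const_mul (1+2*lam)))
  have Hh := HE.mul HK
  erw [Hh.fderiv]
  simp only [ContinuousLinearMap.add_apply, ContinuousLinearMap.smul_apply,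
    ContinuousLinearMap.coe_smul', Pi.smul_apply, ContinuousLinearMap.sub_apply,
    ContinuousLinearMap.neg_apply, ContinuousLinearMap.coe_comp', Function.comp_apply,
    smul_eq_mul, PiLp.proj_apply, Pi.mul_apply, Pi.add_apply, Pi.sub_apply]
  ring

/-- the formal adjoint of `A_λ` in `L²(ℝⁿ, e^{-V}dx)` is `A_{-1-λ}`. -/
theorem statement18 (n : ℕ) (V : Euc n → ℝ) (b : Euc n → Euc n)
    (hV : ContDiff ℝ 2 V) (hb : ContDiff ℝ 1 b)
    (hbB : ∃ M : ℝ, ∀ x, ‖b x‖ ≤ M) (hbD : ∃ M : ℝ, ∀ x, ‖fderiv ℝ b x‖ ≤ M)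
    (hC : ∀ x : Euc n, ⟪gradient V x, b x⟫_ℝ = 0)
    (lam : ℝ) (f g : Euc n → ℝ)
    (hf : ContDiff ℝ (⊤ : ℕ∞) f) (hfs : HasCompactSupport f)
    (hg : ContDiff ℝ (⊤ : ℕ∞) g) (hgs : HasCompactSupport g) :
    ∫ x : Euc n, Aop n V b lam f x * g x * Real.exp (-V x)
      = ∫ x : Euc n, f x * Aop n V b (-1 - lam) g x * Real.exp (-V x) := by

  classical
  set E : Fin n → Euc n := fun i => EuclideanSpace.single i 1 with hE
  set h : Fin n → Euc n → ℝ := fun i y => Real.exp (-V y) *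
      ((1/2) * (g y * fderiv ℝ f y (E i) - f y * fderiv ℝ g y (E i))
       + (1+2*lam) * (f y * (g y * b y i))) with hh
  have hVc : Continuous V := hV.continuous
  have hexpc : Continuous (fun y : Euc n => Real.exp (-V y)) :=
    Real.continuous_exp.comp hVc.neg
  have hexp1 : ContDiff ℝ 1 (fun y : Euc n => Real.exp (-V y)) :=
    Real.contDiff_exp.comp (hV.of_le one_le_two).neg
  -- continuity of Aop applied to a smooth function
  have contA : ∀ (μ : ℝ) (u : Euc n → ℝ), ContDiff ℝ (⊤ : ℕ∞) u → Continuous (Aop n V b μ u) := by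
    intro μ u hu
    have h1 : Continuous (fun x => lap n u x) := by
      apply continuous_finset_sum
      intro i _
      have hui : ContDiff ℝ (⊤ : ℕ∞) (fun y => fderiv ℝ u y (EuclideanSpace.single i 1)) :=
        (hu.fderiv_right (by simp)).clm_apply contDiff_const
      have : ContDiff ℝ (⊤ : ℕ∞) (fun x => fderiv ℝ
          (fun y => fderiv ℝ u y (EuclideanSpace.single i 1)) x (EuclideanSpace.single i 1)) :=
        (hui.fderiv_right (by simp)).clm_apply contDiff_const
      exact this.continuous
    have hgradV : Continuous (fun x => gradient V x) := by
      apply Continuous.comp (LinearIsometryEquiv.continuous _)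
      exact hV.continuous_fderiv (by norm_num)
    have hgradu : Continuous (fun x => gradient u x) := by
      apply Continuous.comp (LinearIsometryEquiv.continuous _)
      exact hu.continuous_fderiv (by simp)
    have h2 : Continuous (fun x => ⟪gradient V x, gradient u x⟫_ℝ) := hgradV.inner hgradu
    have h3 : Continuous (fun x => ⟪b x, gradient u x⟫_ℝ) :=
      (hb.continuous).inner hgradu
    have h4 : Continuous (fun x => Upot n b μ x) := by
      have hdiv : Continuous (fun x => divg n b x) := by
        apply continuous_finset_sum
        intro i _
        exact ((hb.continuous_fderiv one_ne_zero).clm_apply continuous_const).inner continuous_const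
      have hnb : Continuous (fun x => ‖b x‖ ^ 2) := (hb.continuous.norm.pow 2)
      exact (continuous_const.mul hnb).add (continuous_const.mul hdiv)
    exact ((((continuous_const.mul h1).sub (continuous_const.mul h2)).add
      (continuous_const.mul h3)).add (h4.mul (hu.continuous)))
  -- integrability of the two integrands
  have I1 : Integrable (fun x : Euc n => Aop n V b lam f x * g x * Real.exp (-V x)) := by
    apply Continuous.integrable_of_hasCompactSupport
    · exact ((contA lam f hf).mul hg.continuous).mul hexpc
    · exact (hgs.mul_left).mul_right
  have I2 : Integrable (fun x : Euc n => f x * Aop n V b (-1-lam) g x * Real.exp (-V x)) := by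
    apply Continuous.integrable_of_hasCompactSupport
    · exact (hf.continuous.mul (contA _ g hg)).mul hexpc
    · exact (hfs.mul_right).mul_right
  -- properties of the auxiliary functions h i
  have hbci : ∀ i : Fin n, ContDiff ℝ 1 (fun y => b y i) := by
    intro i
    have := (EuclideanSpace.proj (𝕜 := ℝ) i).contDiff.comp hb
    simpa only [Function.comp_def, PiLp.proj_apply] using this
  have hhc : ∀ i : Fin n, ContDiff ℝ 1 (h i) := by
    intro i
    have hfi : ContDiff ℝ 1 (fun y => fderiv ℝ f y (E i)) :=
      ((hf.fderiv_right (m := ((⊤ : ℕ∞) : WithTop ℕ∞)) (by simp)).clm_apply contDiff_const).of_le (by simp)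
    have hgi : ContDiff ℝ 1 (fun y => fderiv ℝ g y (E i)) :=
      ((hg.fderiv_right (m := ((⊤ : ℕ∞) : WithTop ℕ∞)) (by simp)).clm_apply contDiff_const).of_le (by simp)
    have hf1 : ContDiff ℝ 1 f := hf.of_le (by simp)
    have hg1 : ContDiff ℝ 1 g := hg.of_le (by simp)
    exact hexp1.mul (((contDiff_const.mul ((hg1.mul hfi).sub (hf1.mul hgi)))).add
      (contDiff_const.mul (hf1.mul (hg1.mul (hbci i)))))
  have hhs : ∀ i : Fin n, HasCompactSupport (h i) := by
    intro i
    apply HasCompactSupport.intro (hfs.union hgs)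
    intro x hx
    have hf0 : f x = 0 := image_eq_zero_of_notMem_tsupport (fun hc => hx (Or.inl hc))
    have hg0 : g x = 0 := image_eq_zero_of_notMem_tsupport (fun hc => hx (Or.inr hc))
    simp [hh, hf0, hg0]
  -- the pointwise divergence identity
  have pointwise : ∀ x : Euc n,
      Aop n V b lam f x * g x * Real.exp (-V x)
        - f x * Aop n V b (-1-lam) g x * Real.exp (-V x)
      = ∑ i : Fin n, fderiv ℝ (h i) x (E i) := by
    intro x
    have key : ∀ i : Fin n, fderiv ℝ (h i) x (E i)
        = (-(1/2) * g x * Real.exp (-V x)) * (fderiv ℝ V x (E i) * fderiv ℝ f x (E i))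
          + ((1/2) * f x * Real.exp (-V x)) * (fderiv ℝ V x (E i) * fderiv ℝ g x (E i))
          + (-(1+2*lam) * f x * g x * Real.exp (-V x)) * (fderiv ℝ V x (E i) * b x i)
          + ((1/2) * g x * Real.exp (-V x)) *
              (fderiv ℝ (fun y => fderiv ℝ f y (E i)) x (E i))
          + (-(1/2) * f x * Real.exp (-V x)) *
              (fderiv ℝ (fun y => fderiv ℝ g y (E i)) x (E i))
          + ((1+2*lam) * g x * Real.exp (-V x)) * (b x i * fderiv ℝ f x (E i))
          + ((1+2*lam) * f x * Real.exp (-V x)) * (b x i * fderiv ℝ g x (E i))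
          + ((1+2*lam) * f x * g x * Real.exp (-V x)) * (fderiv ℝ b x (E i) i) :=
      fun i => aux_fd n V b f g lam hV hb hf hg i x
    rw [Finset.sum_congr rfl (fun i _ => key i), aux_sum_split]
    have SA : ∑ i : Fin n, fderiv ℝ V x (E i) * fderiv ℝ f x (E i)
        = ⟪gradient V x, gradient f x⟫_ℝ := (aux_grad_inner n V f x).symm
    have SB : ∑ i : Fin n, fderiv ℝ V x (E i) * fderiv ℝ g x (E i)
        = ⟪gradient V x, gradient g x⟫_ℝ := (aux_grad_inner n V g x).symm
    have SC : ∑ i : Fin n, fderiv ℝ V x (E i) * b x i = 0 := by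
      rw [← aux_bV_inner n V (b x) x]; exact hC x
    have SF : ∑ i : Fin n, b x i * fderiv ℝ f x (E i) = ⟪b x, gradient f x⟫_ℝ :=
      (aux_b_inner n (b x) f x).symm
    have SG : ∑ i : Fin n, b x i * fderiv ℝ g x (E i) = ⟪b x, gradient g x⟫_ℝ :=
      (aux_b_inner n (b x) g x).symm
    have SD : ∑ i : Fin n, fderiv ℝ (fun y => fderiv ℝ f y (E i)) x (E i) = lap n f x := rfl
    have SE : ∑ i : Fin n, fderiv ℝ (fun y => fderiv ℝ g y (E i)) x (E i) = lap n g x := rfl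
    have SH : ∑ i : Fin n, fderiv ℝ b x (E i) i = divg n b x := by
      apply Finset.sum_congr rfl
      intro i _
      simp [divg, hE, EuclideanSpace.inner_single_right]
    rw [SA, SB, SC, SD, SE, SF, SG, SH]
    simp only [Aop, Upot]
    ring
  rw [← sub_eq_zero, ← integral_sub I1 I2]
  rw [show (fun x : Euc n => Aop n V b lam f x * g x * Real.exp (-V x)
        - f x * Aop n V b (-1-lam) g x * Real.exp (-V x))
      = fun x : Euc n => ∑ i : Fin n, fderiv ℝ (h i) x (E i) from funext pointwise]
  rw [integral_finset_sum]
  · exact Finset.sum_eq_zero fun i _ => aux_int_fderiv_zero n (h i) (hhc i) (hhs i) (E i)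
  · intro i _
    apply Continuous.integrable_of_hasCompactSupport
    · exact ((hhc i).continuous_fderiv one_ne_zero).clm_apply continuous_const
    · apply HasCompactSupport.intro ((hhs i).fderiv (𝕜 := ℝ))
      intro x hx
      have h0 : fderiv ℝ (h i) x = 0 := image_eq_zero_of_notMem_tsupport hx
      simp [h0]
end
end
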